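/- arXiv:2412.11062 — 14 statements merged into one kernel-verified Lean document; each statement's English description precedes it below -/
import Mathlib

section
/- Let (a_n) be a strictly decreasing sequence of positive reals with a_n → 0 and a_{n+1}/a_n → 1. Then there exists a subsequence (a_{n_k}) such that a_{n_{k+1}}/a_{n_k} → 1 and a_{n_k} − a_{n_{k+1}} ≤ 2(a_{n_m} − a_{n_{m+1}}) for all k > m. -/
/-!
Let `s p = sup_{m ≥ p} (a m - a (m + 1))` be the largest step of `a` from `p` on. Starting
from `n k`, let `n (k + 1)` be the first index at which `a` has dropped by at least `s (n k)`.
As the last step taken is itself at most `s (n k)`, the drop `a (n k) - a (n (k + 1))` lies in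
`[s (n k), 2 s (n k)]`. Since `s` is nonincreasing, for `m < k` the `k`-th drop is at most
`2 s (n k) ≤ 2 s (n m)`, i.e. at most twice the `m`-th drop. The ratio hypothesis makes
`s p = o(a p)`, so the drops are `o(a (n k))`, which is the ratio condition for the subsequence.
-/

open Filter Topology

noncomputable def tailSupGap (a : ℕ → ℝ) (p : ℕ) : ℝ :=
  ⨆ j : ℕ, (a (p + j) - a (p + j + 1))

section TailSupGap

variable {a : ℕ → ℝ}

lemma bddAbove_range_gap (ha : Antitone a) (h0 : ∀ n, 0 ≤ a n) (p : ℕ) :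
    BddAbove (Set.range fun j => a (p + j) - a (p + j + 1)) :=
  ⟨a p, by rintro _ ⟨j, rfl⟩; linarith [ha (Nat.le_add_right p j), h0 (p + j + 1)]⟩

lemma sub_succ_le_tailSupGap (ha : Antitone a) (h0 : ∀ n, 0 ≤ a n) {p m : ℕ} (hpm : p ≤ m) :
    a m - a (m + 1) ≤ tailSupGap a p := by
  obtain ⟨j, rfl⟩ := Nat.exists_eq_add_of_le hpm
  exact le_ciSup (bddAbove_range_gap ha h0 p) j

lemma tailSupGap_antitone (ha : Antitone a) (h0 : ∀ n, 0 ≤ a n) : Antitone (tailSupGap a) :=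
  fun _ q hpq => ciSup_le fun j => sub_succ_le_tailSupGap ha h0 (hpq.trans (Nat.le_add_right q j))

lemma tailSupGap_pos (ha : StrictAnti a) (h0 : ∀ n, 0 ≤ a n) (p : ℕ) : 0 < tailSupGap a p :=
  (sub_pos.2 (ha p.lt_succ_self)).trans_le (sub_succ_le_tailSupGap ha.antitone h0 le_rfl)

lemma tailSupGap_lt (ha : StrictAnti a) (hpos : ∀ n, 0 < a n) (p : ℕ) : tailSupGap a p < a p := by
  have hmax : tailSupGap a p ≤ max (a p - a (p + 1)) (a (p + 1)) := by
    refine ciSup_le fun j => ?_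
    rcases j with _ | j
    · exact le_max_left _ _
    · have := ha.antitone (show p + 1 ≤ p + (j + 1) by omega)
      exact le_max_of_le_right (by linarith [hpos (p + (j + 1) + 1)])
  exact hmax.trans_lt (max_lt (by linarith [hpos (p + 1)]) (ha p.lt_succ_self))

lemma tendsto_tailSupGap_div (ha : Antitone a) (hpos : ∀ n, 0 < a n)
    (hratio : Tendsto (fun n => a (n + 1) / a n) atTop (𝓝 1)) :
    Tendsto (fun p => tailSupGap a p / a p) atTop (𝓝 0) := by
  have h0 : ∀ n, 0 ≤ a n := fun n => (hpos n).le
  have hsmall : ∀ ε > 0, ∀ᶠ p in atTop, tailSupGap a p ≤ ε * a p := by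
    intro ε hε
    obtain ⟨M, hM⟩ := eventually_atTop.1 (hratio.eventually (lt_mem_nhds (sub_lt_self 1 hε)))
    filter_upwards [eventually_ge_atTop M] with p hp
    refine ciSup_le fun j => ?_
    have hstep := hM (p + j) (by omega)
    rw [lt_div_iff₀ (hpos _)] at hstep
    have := mul_le_mul_of_nonneg_left (ha (Nat.le_add_right p j)) hε.le
    linarith
  refine tendsto_order.2 ⟨fun b hb => Eventually.of_forall fun p => ?_, fun b hb => ?_⟩
  · exact hb.trans_le (div_nonneg
      ((sub_nonneg.2 (ha p.le_succ)).trans (sub_succ_le_tailSupGap ha h0 le_rfl)) (h0 p))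
  · filter_upwards [hsmall (b / 2) (half_pos hb)] with p hp
    rw [div_lt_iff₀ (hpos p)]
    nlinarith [hpos p]

end TailSupGap

lemma exists_gt_drop_mem_Icc {a : ℕ → ℝ} (hlim : Tendsto a atTop (𝓝 0)) {p : ℕ} {δ : ℝ}
    (hδ : 0 < δ) (hδp : δ < a p) (hgap : ∀ m, p ≤ m → a m - a (m + 1) ≤ δ) :
    ∃ q, p < q ∧ a p - a q ∈ Set.Icc δ (2 * δ) := by
  classical
  have hex : ∃ j, a (p + j) ≤ a p - δ := by
    obtain ⟨m, hm, hpm⟩ :=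
      ((hlim.eventually (gt_mem_nhds (sub_pos.2 hδp))).and (eventually_ge_atTop p)).exists
    exact ⟨m - p, by rw [Nat.add_sub_cancel' hpm]; exact hm.le⟩
  obtain ⟨i, hi⟩ : ∃ i, Nat.find hex = i + 1 := by
    refine Nat.exists_eq_succ_of_ne_zero fun h => ?_
    have := Nat.find_spec hex
    rw [h, add_zero] at this
    linarith
  have hlast := Nat.find_spec hex
  rw [hi, ← add_assoc] at hlast
  have hprev : a p - δ < a (p + i) := not_le.1 (Nat.find_min hex (by omega))
  have := hgap (p + i) (Nat.le_add_right p i)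
  exact ⟨p + i + 1, by omega, by linarith, by linarith⟩

theorem stmt_1 (a : ℕ → ℝ) (hpos : ∀ n, 0 < a n) (hanti : StrictAnti a)
    (hlim : Tendsto a atTop (nhds 0))
    (hratio : Tendsto (fun n => a (n + 1) / a n) atTop (nhds 1)) :
    ∃ n : ℕ → ℕ, StrictMono n ∧
      Tendsto (fun k => a (n (k + 1)) / a (n k)) atTop (nhds 1) ∧
      ∀ k m : ℕ, m < k → a (n k) - a (n (k + 1)) ≤ 2 * (a (n m) - a (n (m + 1))) := by
  have h0 : ∀ n, 0 ≤ a n := fun n => (hpos n).le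
  choose next hnext_gt hnext_drop using fun p =>
    exists_gt_drop_mem_Icc hlim (tailSupGap_pos hanti h0 p) (tailSupGap_lt hanti hpos p)
      fun m hm => sub_succ_le_tailSupGap hanti.antitone h0 hm
  set n : ℕ → ℕ := fun k => next^[k] 0
  have hn_succ : ∀ k, n (k + 1) = next (n k) := fun k => Function.iterate_succ_apply' next k 0
  have hn : StrictMono n := strictMono_nat_of_lt_succ fun k => hn_succ k ▸ hnext_gt (n k)
  have hdrop : ∀ k,
      a (n k) - a (n (k + 1)) ∈ Set.Icc (tailSupGap a (n k)) (2 * tailSupGap a (n k)) :=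
    fun k => hn_succ k ▸ hnext_drop (n k)
  refine ⟨n, hn, ?_, fun k m hmk => ?_⟩
  · have hrel : Tendsto (fun k => (a (n k) - a (n (k + 1))) / a (n k)) atTop (𝓝 0) := by
      refine squeeze_zero (fun k => div_nonneg ?_ (h0 _)) (fun k => ?_)
        (by simpa using ((tendsto_tailSupGap_div hanti.antitone hpos hratio).comp
          hn.tendsto_atTop).const_mul 2)
      · exact (tailSupGap_pos hanti h0 _).le.trans (hdrop k).1
      · rw [← mul_div_assoc]
        exact div_le_div_of_nonneg_right (hdrop k).2 (h0 _)
    have hsplit : ∀ k, a (n (k + 1)) / a (n k) = 1 - (a (n k) - a (n (k + 1))) / a (n k) :=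
      fun k => by field_simp [(hpos (n k)).ne']; ring
    simpa [hsplit] using tendsto_const_nhds.sub hrel
  · linarith [(hdrop k).2, (hdrop m).1, tailSupGap_antitone hanti.antitone h0 (hn hmk).le]
end

section
/- If (a_n) is a strictly decreasing sequence of positive reals converging to 0 with limsup_{n→∞} a_{n+1}/a_n < 1, then for every Lebesgue measurable set E ⊆ ℝ of positive Lebesgue measure there exists a bi-Lipschitz map f : ℝ → ℝ with f(a_n) ∈ E for all n. -/
open MeasureTheory Filter

/-!
Since `limsup a (n + 1) / a n < 1`, there is `q < 1` with `a (n + 1) ≤ q * a n`, so the gaps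
`a n - a (n + 1)` are comparable to `a n`. At a Lebesgue density point `x` of `E`, for every small
`r` the set `E` meets `[x + c r, x + r]`, where `c = (1 + q) / 2`; pick `b n ∈ E` in
`[x + c l a n, x + l a n]`. Then `b n - b (n + 1)` is comparable to `a n - a (n + 1)`, and the
primitive of the step function with slope `(b n - b (n + 1)) / (a n - a (n + 1))` on
`(a (n + 1), a n]`, normalised by `f 0 = x`, is bi-Lipschitz with `f (a n) = b n`.
-/

/-- `f : ℝ → ℝ` is bi-Lipschitz. -/
def BiLipschitz (f : ℝ → ℝ) : Prop :=
  ∃ L : ℝ, 1 ≤ L ∧ ∀ x y : ℝ, L⁻¹ * |x - y| ≤ |f x - f y| ∧ |f x - f y| ≤ L * |x - y|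

open Set
open scoped Topology

lemma exists_lt_forall_le_of_limsup_lt {u : ℕ → ℝ} {b : ℝ} (hu : ∀ n, u n < b)
    (hlim : limsup u atTop < b) : ∃ q < b, ∀ n, u n ≤ q := by
  obtain ⟨q₀, hlq₀, hq₀⟩ := exists_between hlim
  obtain ⟨N, hN⟩ := eventually_atTop.1 <|
    eventually_lt_of_limsup_lt hlq₀ (isBoundedUnder_of ⟨b, fun n => (hu n).le⟩)
  obtain ⟨k, -, hk⟩ := (Finset.Iic N).exists_max_image u ⟨0, by simp⟩
  refine ⟨max q₀ (u k), max_lt hq₀ (hu k), fun n => ?_⟩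
  rcases lt_or_ge n N with hn | hn
  · exact le_max_of_le_right (hk n (Finset.mem_Iic.2 hn.le))
  · exact le_max_of_le_left (hN n hn).le

lemma exists_forall_inter_Icc_nonempty {E : Set ℝ} (hE : volume E ≠ 0) {c : ℝ} (hc : c < 1) :
    ∃ x δ : ℝ, 0 < δ ∧ ∀ r ∈ Ioc 0 δ, (E ∩ Icc (x + c * r) (x + r)).Nonempty := by
  -- The interval only grows as `c` decreases, so it suffices to treat `c' = max c 0`.
  set c' := max c 0
  have hc' : c' < 1 := max_lt hc one_pos
  have hc'0 : 0 ≤ c' := le_max_right c 0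
  obtain ⟨x, -, hx⟩ := Measure.exists_mem_of_measure_ne_zero_of_ae hE
    (Besicovitch.ae_tendsto_measure_inter_div volume E)
  have hθ : ENNReal.ofReal ((1 + c') / 2) < 1 := by
    rw [ENNReal.ofReal_lt_one]; linarith
  obtain ⟨δ, hδ, hδE⟩ :=
    mem_nhdsGT_iff_exists_Ioc_subset.1 (hx.eventually (eventually_gt_nhds hθ))
  refine ⟨x, δ, hδ, fun r hr => ?_⟩
  have hr0 : 0 < r := hr.1
  have hdense : ENNReal.ofReal ((1 + c') * r) < volume (E ∩ Metric.closedBall x r) := by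
    have h : ENNReal.ofReal ((1 + c') / 2) < _ := hδE hr
    rw [Real.volume_closedBall,
      ENNReal.lt_div_iff_mul_lt (by simp [hr0]) (Or.inl ENNReal.ofReal_ne_top),
      ← ENNReal.ofReal_mul (by linarith)] at h
    convert h using 2; ring
  have hIc : Icc (x + c' * r) (x + r) ⊆ Icc (x + c * r) (x + r) :=
    Icc_subset_Icc_left (by gcongr; exact le_max_left _ _)
  -- Otherwise `E` misses a part of length `(1 - c') r` of the ball of length `2 r`,
  -- so its density there is at most `(1 + c') / 2`.
  by_contra hempty
  have hdisj : Disjoint (E ∩ Metric.closedBall x r) (Icc (x + c' * r) (x + r)) :=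
    Set.disjoint_left.2 fun y hy hyI => hempty ⟨y, hy.1, hIc hyI⟩
  have hsub :
      E ∩ Metric.closedBall x r ∪ Icc (x + c' * r) (x + r) ⊆ Metric.closedBall x r := by
    rw [Real.closedBall_eq_Icc]
    exact union_subset inter_subset_right (Icc_subset_Icc (by nlinarith) le_rfl)
  have hvol := measure_mono (μ := volume) hsub
  rw [measure_union hdisj measurableSet_Icc, Real.volume_Icc, Real.volume_closedBall] at hvol
  have hsum : ENNReal.ofReal ((1 + c') * r) + ENNReal.ofReal (x + r - (x + c' * r)) =
      ENNReal.ofReal (2 * r) := by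
    rw [← ENNReal.ofReal_add (by positivity) (by nlinarith)]; ring_nf
  exact absurd (hsum ▸ ENNReal.add_lt_add_right ENNReal.ofReal_ne_top hdense) (not_lt.2 hvol)

lemma exists_measurable_eqOn_Ioc {a : ℕ → ℝ} (ha : Antitone a) (hlim : Tendsto a atTop (𝓝 0))
    {β : Type*} [MeasurableSpace β] (s : ℕ → β) :
    ∃ σ : ℝ → β, Measurable σ ∧ (∀ u, σ u ∈ range s) ∧
      ∀ n, ∀ u ∈ Ioc (a (n + 1)) (a n), σ u = s n := by
  classical
  have hex : ∀ u : ℝ, ∃ n, a (n + 1) < u ∨ u ≤ 0 := fun u => by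
    rcases le_or_gt u 0 with hu | hu
    · exact ⟨0, .inr hu⟩
    · exact ((hlim.comp (tendsto_add_atTop_nat 1)).eventually
        (eventually_lt_nhds hu)).exists.imp fun _ => .inl
  refine ⟨fun u => s (Nat.find (hex u)), ?_, fun u => mem_range_self _, fun n u hu => ?_⟩
  · refine Measurable.find (f := fun n _ => s n) (fun _ => measurable_const) (fun n => ?_) hex
    exact (measurableSet_lt measurable_const measurable_id).union
      (measurableSet_le measurable_id measurable_const)
  · have hu0 : 0 < u := (ha.le_of_tendsto hlim (n + 1)).trans_lt hu.1
    refine congrArg s ((Nat.find_eq_iff _).2 ⟨.inl hu.1, fun k hk => not_or.2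
      ⟨not_lt.2 (hu.2.trans (ha (Nat.succ_le_of_lt hk))), not_le.2 hu0⟩⟩)

lemma intervalIntegrable_of_forall_mem_Icc {σ : ℝ → ℝ} (hσ : Measurable σ) {m M : ℝ}
    (hbound : ∀ u, σ u ∈ Icc m M) (p r : ℝ) : IntervalIntegrable σ volume p r := by
  rw [intervalIntegrable_iff]
  exact IntegrableOn.of_bound measure_Ioc_lt_top hσ.aestronglyMeasurable (max |m| |M|)
    (ae_of_all _ fun u => abs_le_max_abs_abs (hbound u).1 (hbound u).2)

lemma mul_sub_le_integral_and_integral_le_mul_sub {σ : ℝ → ℝ} (hσ : Measurable σ) {m M : ℝ}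
    (hbound : ∀ u, σ u ∈ Icc m M) {p r : ℝ} (hpr : p ≤ r) :
    m * (r - p) ≤ ∫ u in p..r, σ u ∧ ∫ u in p..r, σ u ≤ M * (r - p) := by
  have hint := intervalIntegrable_of_forall_mem_Icc hσ hbound p r
  constructor
  · calc m * (r - p) = ∫ _ in p..r, m := by simp [mul_comm]
      _ ≤ ∫ u in p..r, σ u :=
        intervalIntegral.integral_mono_on hpr intervalIntegrable_const hint fun u _ => (hbound u).1
  · calc ∫ u in p..r, σ u ≤ ∫ _ in p..r, M :=
        intervalIntegral.integral_mono_on hpr hint intervalIntegrable_const fun u _ => (hbound u).2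
      _ = M * (r - p) := by simp [mul_comm]

lemma biLipschitz_of_forall_le {f : ℝ → ℝ} {m M : ℝ} (hm : 0 < m)
    (h : ∀ p r, p ≤ r → m * (r - p) ≤ f r - f p ∧ f r - f p ≤ M * (r - p)) :
    BiLipschitz f := by
  have habs : ∀ x y, m * |x - y| ≤ |f x - f y| ∧ |f x - f y| ≤ M * |x - y| := by
    intro x y
    wlog hxy : y ≤ x generalizing x y
    · simpa only [abs_sub_comm] using this y x (le_of_not_ge hxy)
    have hmono := h y x hxy
    rwa [abs_of_nonneg (sub_nonneg.2 hxy),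
      abs_of_nonneg ((mul_nonneg hm.le (sub_nonneg.2 hxy)).trans hmono.1)]
  refine ⟨max 1 (max M m⁻¹), le_max_left _ _, fun x y => ⟨?_, ?_⟩⟩
  · calc (max 1 (max M m⁻¹))⁻¹ * |x - y| ≤ m * |x - y| := by
          gcongr
          exact inv_le_of_inv_le₀ hm (le_max_of_le_right (le_max_right _ _))
      _ ≤ |f x - f y| := (habs x y).1
  · calc |f x - f y| ≤ M * |x - y| := (habs x y).2
      _ ≤ max 1 (max M m⁻¹) * |x - y| := by gcongr; exact le_max_of_le_right (le_max_left _ _)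

lemma eq_of_forall_sub_succ_eq_of_tendsto {G : Type*} [AddCommGroup G] [TopologicalSpace G]
    [IsTopologicalAddGroup G] [T2Space G] {u v : ℕ → G} {x : G} (hu : Tendsto u atTop (𝓝 x))
    (hv : Tendsto v atTop (𝓝 x)) (h : ∀ n, u n - u (n + 1) = v n - v (n + 1)) : u = v := by
  have hconst : ∀ n, u n - v n = u 0 - v 0 := fun n => by
    induction n with
    | zero => rfl
    | succ k ih => rw [← ih, ← sub_eq_sub_iff_sub_eq_sub.1 (h k)]
  have hlim : Tendsto (fun n => u n - v n) atTop (𝓝 (u 0 - v 0)) := by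
    simp only [hconst, tendsto_const_nhds]
  have h0 : u 0 - v 0 = 0 := tendsto_nhds_unique hlim (by simpa using hu.sub hv)
  funext n
  exact sub_eq_zero.1 ((hconst n).trans h0)

theorem exists_biLipschitz_apply_eq {a b : ℕ → ℝ} (ha : StrictAnti a)
    (hlim : Tendsto a atTop (𝓝 0)) {x : ℝ} (hb : Tendsto b atTop (𝓝 x)) {m M : ℝ} (hm : 0 < m)
    (hslope : ∀ n, m * (a n - a (n + 1)) ≤ b n - b (n + 1) ∧
      b n - b (n + 1) ≤ M * (a n - a (n + 1))) :
    ∃ f : ℝ → ℝ, BiLipschitz f ∧ ∀ n, f (a n) = b n := by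
  have hgap : ∀ n, 0 < a n - a (n + 1) := fun n => sub_pos.2 (ha n.lt_succ_self)
  set s : ℕ → ℝ := fun n => (b n - b (n + 1)) / (a n - a (n + 1))
  have hs : ∀ n, s n ∈ Icc m M := fun n =>
    ⟨(le_div_iff₀ (hgap n)).2 (hslope n).1, (div_le_iff₀ (hgap n)).2 (hslope n).2⟩
  obtain ⟨σ, hσ, hσs, hσa⟩ := exists_measurable_eqOn_Ioc ha.antitone hlim s
  have hσI : ∀ u, σ u ∈ Icc m M := fun u => by
    obtain ⟨n, hn⟩ := hσs u
    exact hn ▸ hs n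
  have hint := intervalIntegrable_of_forall_mem_Icc hσ hσI
  set f : ℝ → ℝ := fun t => x + ∫ u in 0..t, σ u
  have hf_sub : ∀ p r, f r - f p = ∫ u in p..r, σ u := fun p r => by
    simp only [f, add_sub_add_left_eq_sub]
    exact intervalIntegral.integral_interval_sub_left (hint 0 r) (hint 0 p)
  have hstep : ∀ n, f (a n) - f (a (n + 1)) = b n - b (n + 1) := fun n => by
    have hle : a (n + 1) ≤ a n := (ha n.lt_succ_self).le
    rw [hf_sub, intervalIntegral.integral_of_le hle,
      setIntegral_congr_fun measurableSet_Ioc (hσa n), setIntegral_const,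
      Real.volume_real_Ioc_of_le hle, smul_eq_mul, mul_comm]
    exact div_mul_cancel₀ _ (hgap n).ne'
  have hfa : Tendsto (fun n => f (a n)) atTop (𝓝 x) := by
    have hf : Continuous f := continuous_const.add (intervalIntegral.continuous_primitive hint 0)
    have hf0 : f 0 = x := by simp [f]
    exact hf0 ▸ (hf.tendsto 0).comp hlim
  refine ⟨f, biLipschitz_of_forall_le (M := M) hm fun p r hpr => ?_,
    congrFun (eq_of_forall_sub_succ_eq_of_tendsto hfa hb hstep)⟩
  rw [hf_sub]
  exact mul_sub_le_integral_and_integral_le_mul_sub hσ hσI hpr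

lemma sub_succ_bounds_of_mem_Icc {a b : ℕ → ℝ} {q c l x : ℝ} (ha : ∀ n, 0 ≤ a n)
    (hq : ∀ n, a (n + 1) ≤ q * a n) (hq1 : q < 1) (hqc : q ≤ c) (hc : 0 ≤ c) (hl : 0 ≤ l)
    (hb : ∀ n, b n ∈ Icc (x + c * (l * a n)) (x + l * a n)) (n : ℕ) :
    (c - q) * l * (a n - a (n + 1)) ≤ b n - b (n + 1) ∧
      b n - b (n + 1) ≤ l / (1 - q) * (a n - a (n + 1)) := by
  obtain ⟨hb₀, hb₀'⟩ := hb n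
  obtain ⟨hb₁, hb₁'⟩ := hb (n + 1)
  have hlq : l * a (n + 1) ≤ l * (q * a n) := mul_le_mul_of_nonneg_left (hq n) hl
  constructor
  · linarith [mul_nonneg (mul_nonneg (sub_nonneg.2 hqc) hl) (ha (n + 1))]
  · have hgap : l * a n ≤ l / (1 - q) * (a n - a (n + 1)) := by
      rw [div_mul_eq_mul_div, le_div_iff₀ (sub_pos.2 hq1)]
      linarith
    linarith [mul_nonneg hc (mul_nonneg hl (ha (n + 1)))]

theorem stmt_2_general (a : ℕ → ℝ) (hpos : ∀ n, 0 < a n) (hanti : StrictAnti a)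
    (hlim : Tendsto a atTop (nhds 0))
    (hratio : limsup (fun n => a (n + 1) / a n) atTop < 1)
    (E : Set ℝ) (hposE : 0 < volume E) :
    ∃ f : ℝ → ℝ, BiLipschitz f ∧ ∀ n, f (a n) ∈ E := by
  obtain ⟨q, hq1, hq⟩ : ∃ q < 1, ∀ n, a (n + 1) ≤ q * a n := by
    obtain ⟨q, hq1, hq⟩ := exists_lt_forall_le_of_limsup_lt
      (fun n => (div_lt_one (hpos n)).2 (hanti n.lt_succ_self)) hratio
    exact ⟨q, hq1, fun n => (div_le_iff₀ (hpos n)).1 (hq n)⟩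
  have hq0 : 0 < q := pos_of_mul_pos_left ((hpos 1).trans_le (hq 0)) (hpos 0).le
  obtain ⟨x, δ, hδ, hEI⟩ :=
    exists_forall_inter_Icc_nonempty hposE.ne' (c := (1 + q) / 2) (by linarith)
  set l := δ / a 0
  have hl : 0 < l := div_pos hδ (hpos 0)
  choose b hbE hbI using fun n => hEI (l * a n)
    ⟨mul_pos hl (hpos n), (mul_le_mul_of_nonneg_left (hanti.antitone n.zero_le) hl.le).trans
      (div_mul_cancel₀ δ (hpos 0).ne').le⟩
  have hbx : Tendsto b atTop (𝓝 x) := by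
    have hla : Tendsto (fun n => l * a n) atTop (𝓝 0) := by simpa using hlim.const_mul l
    exact tendsto_of_tendsto_of_tendsto_of_le_of_le
      (by simpa using (hla.const_mul _).const_add x) (by simpa using hla.const_add x)
      (fun n => (hbI n).1) (fun n => (hbI n).2)
  obtain ⟨f, hf, hfb⟩ := exists_biLipschitz_apply_eq hanti hlim hbx
    (mul_pos (by linarith) hl : 0 < ((1 + q) / 2 - q) * l)
    (sub_succ_bounds_of_mem_Icc (fun n => (hpos n).le) hq hq1 (by linarith) (by positivity)
      hl.le hbI)
  exact ⟨f, hf, fun n => hfb n ▸ hbE n⟩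

theorem stmt_2 (a : ℕ → ℝ) (hpos : ∀ n, 0 < a n) (hanti : StrictAnti a)
    (hlim : Tendsto a atTop (nhds 0))
    (hratio : limsup (fun n => a (n + 1) / a n) atTop < 1)
    (E : Set ℝ) (hE : MeasurableSet E) (hposE : 0 < volume E) :
    ∃ f : ℝ → ℝ, BiLipschitz f ∧ ∀ n, f (a n) ∈ E :=
  stmt_2_general a hpos hanti hlim hratio E hposE
end

section
/- If (a_n) is a strictly decreasing sequence of positive reals converging to 0 with lim_{n→∞} a_{n+1}/a_n = 1, then there exists a compact set E ⊆ [0,1] of positive Lebesgue measure such that no bi-Lipschitz map f : ℝ → ℝ satisfies f(a_n) ∈ E for all n and f(0) ∈ E. -/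
open MeasureTheory Filter
open scoped ENNReal


noncomputable def eta (k : ℕ) : ℝ := (16:ℝ)⁻¹ * (2:ℝ)⁻¹ ^ k
noncomputable def betaa (k : ℕ) : ℝ := eta k / (8 * ((k:ℝ)+1)^2)

lemma eta_pos (k : ℕ) : 0 < eta k := by unfold eta; positivity
lemma eta_le_one (k : ℕ) : eta k ≤ 1 := by
  unfold eta
  have : (2:ℝ)⁻¹ ^ k ≤ 1 := pow_le_one₀ (by norm_num) (by norm_num)
  nlinarith
lemma betaa_pos (k : ℕ) : 0 < betaa k := by
  unfold betaa; have := eta_pos k; positivity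

lemma chain_cross (y : ℕ → ℝ) (g c : ℝ) (n : ℕ) (h1 : y n ≤ c) :
    ∀ m, n ≤ m → (∀ j, n ≤ j → j < m → |y (j+1) - y j| ≤ g) → c < y m →
    ∃ j, c < y j ∧ y j ≤ c + g := by
  intro m
  induction m with
  | zero =>
    intro hnm _ h2
    exact absurd h2 (not_lt.mpr ((Nat.le_zero.mp hnm) ▸ h1))
  | succ m ih =>
    intro hnm hstep h2
    rcases eq_or_lt_of_le hnm with he | hlt
    · exact absurd h2 (not_lt.mpr (he ▸ h1))
    · have hnm' : n ≤ m := Nat.lt_succ_iff.mp hlt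
      by_cases hc : c < y m
      · exact ih hnm' (fun j hj1 hj2 => hstep j hj1 (Nat.lt_succ_of_lt hj2)) hc
      · push_neg at hc
        have hs := abs_le.mp (hstep m hnm' (Nat.lt_succ_self m))
        exact ⟨m+1, h2, by linarith [hs.2]⟩

theorem stmt_3 (a : ℕ → ℝ) (hpos : ∀ n, 0 < a n) (hanti : StrictAnti a)
    (hlim : Tendsto a atTop (nhds 0))
    (hratio : Tendsto (fun n => a (n + 1) / a n) atTop (nhds 1)) :
    ∃ E : Set ℝ, E ⊆ Set.Icc 0 1 ∧ IsCompact E ∧ 0 < volume E ∧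
      ∀ f : ℝ → ℝ, BiLipschitz f → ¬ ((∀ n, f (a n) ∈ E) ∧ f 0 ∈ E) := by
  -- choose starting indices N k
  have hN : ∀ k : ℕ, ∃ N : ℕ, a N < 1 ∧ ∀ j, N ≤ j → 1 - betaa k < a (j+1) / a j := by
    intro k
    have h1 : ∀ᶠ n in atTop, a n < 1 := hlim.eventually (eventually_lt_nhds one_pos)
    have h2 : ∀ᶠ n in atTop, 1 - betaa k < a (n+1) / a n :=
      hratio.eventually (eventually_gt_nhds (by linarith [betaa_pos k]))
    obtain ⟨N1, hN1⟩ := eventually_atTop.mp h1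
    obtain ⟨N2, hN2⟩ := eventually_atTop.mp h2
    exact ⟨max N1 N2, hN1 _ (le_max_left _ _),
      fun j hj => hN2 j (le_trans (le_max_right _ _) hj)⟩
  choose N hNa hNr using hN
  set s : ℕ → ℝ := fun k => a (N k) / (4 * ((k:ℝ)+1)) with hs_def
  have hsk : ∀ k, 0 < s k := fun k => by
    simp only [hs_def]; have := hpos (N k); positivity
  have hsk1 : ∀ k, s k ≤ 1 := fun k => by
    simp only [hs_def]
    rw [div_le_one (by positivity)]
    have := hNa k
    have : (0:ℝ) ≤ (k:ℝ) := Nat.cast_nonneg k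
    nlinarith [hNa k]
  set M : ℕ → ℕ := fun k => ⌈1 / s k⌉₊ with hM_def
  set V : ℕ → Set ℝ := fun k =>
    ⋃ i ∈ Finset.range (M k + 2),
      Set.Ioo ((i:ℝ) * s k) ((i:ℝ) * s k + eta k * s k) with hV_def
  refine ⟨Set.Icc 0 1 \ ⋃ k, V k, Set.diff_subset, ?_, ?_, ?_⟩
  · -- compact
    have hUopen : IsOpen (⋃ k, V k) :=
      isOpen_iUnion fun k => isOpen_biUnion fun i _ => isOpen_Ioo
    exact isCompact_Icc.diff hUopen
  · -- positive measure
    have hVle : ∀ k, volume (V k) ≤ ENNReal.ofReal ((2:ℝ)⁻¹ ^ k * 4⁻¹) := by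
      intro k
      refine le_trans (measure_biUnion_finset_le _ _) ?_
      have hvol : ∀ i ∈ Finset.range (M k + 2),
          volume (Set.Ioo ((i:ℝ) * s k) ((i:ℝ) * s k + eta k * s k))
            = ENNReal.ofReal (eta k * s k) := by
        intro i _
        rw [Real.volume_Ioo, add_sub_cancel_left]
      rw [Finset.sum_congr rfl hvol, Finset.sum_const, Finset.card_range, nsmul_eq_mul]
      have hcast : ((M k + 2 : ℕ) : ℝ≥0∞) = ENNReal.ofReal ((M k : ℝ) + 2) := by
        rw [← ENNReal.ofReal_natCast]; norm_num
      rw [hcast, ← ENNReal.ofReal_mul (by positivity)]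
      apply ENNReal.ofReal_le_ofReal
      have hM : (M k : ℝ) < 1 / s k + 1 := Nat.ceil_lt_add_one (one_div_nonneg.mpr (hsk k).le)
      have hMs : (M k : ℝ) * s k ≤ 1 + s k := by
        have h := mul_le_mul_of_nonneg_right hM.le (hsk k).le
        rw [add_mul, div_mul_cancel₀ _ (ne_of_gt (hsk k)), one_mul] at h
        linarith
      have h4 : (M k : ℝ) * s k + 2 * s k ≤ 4 := by linarith [hsk1 k, hsk k]
      have he := eta_pos k
      calc ((M k:ℝ)+2) * (eta k * s k) = eta k * ((M k:ℝ)*s k + 2*s k) := by ring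
      _ ≤ eta k * 4 := mul_le_mul_of_nonneg_left h4 he.le
      _ = (2:ℝ)⁻¹^k * 4⁻¹ := by unfold eta; ring
    have hU : volume (⋃ k, V k) ≤ ENNReal.ofReal (2⁻¹ : ℝ) := by
      refine le_trans (measure_iUnion_le _) ?_
      refine le_trans (ENNReal.tsum_le_tsum hVle) ?_
      rw [← ENNReal.ofReal_tsum_of_nonneg (fun k => by positivity)
        ((summable_geometric_of_lt_one (by norm_num) (by norm_num)).mul_right _)]
      apply ENNReal.ofReal_le_ofReal
      rw [tsum_mul_right, tsum_geometric_of_lt_one (by norm_num) (by norm_num)]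
      norm_num
    have hIcc : volume (Set.Icc (0:ℝ) 1) = 1 := by simp
    have h1 : (1:ℝ≥0∞) - ENNReal.ofReal (2⁻¹:ℝ) = ENNReal.ofReal (2⁻¹:ℝ) := by
      rw [← ENNReal.ofReal_one, ← ENNReal.ofReal_sub _ (by norm_num)]
      norm_num
    have hkey : ENNReal.ofReal (2⁻¹:ℝ) ≤ volume (Set.Icc 0 1 \ ⋃ k, V k) :=
      calc ENNReal.ofReal (2⁻¹:ℝ) = 1 - ENNReal.ofReal (2⁻¹:ℝ) := h1.symm
        _ ≤ 1 - volume (⋃ k, V k) := tsub_le_tsub_left hU 1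
        _ = volume (Set.Icc (0:ℝ) 1) - volume (⋃ k, V k) := by rw [hIcc]
        _ ≤ _ := le_measure_diff
    exact lt_of_lt_of_le (ENNReal.ofReal_pos.mpr (by norm_num)) hkey
  · rintro f ⟨L, hL1, hf⟩ ⟨hfa, -⟩
    have hLpos : (0:ℝ) < L := lt_of_lt_of_le one_pos hL1
    set k := ⌈L⌉₊ with hk_def
    have hLk : L ≤ (k:ℝ) + 1 := by
      have h : L ≤ (k:ℝ) := Nat.le_ceil L
      linarith
    set n := N k with hn_def
    have hA := hpos n
    obtain ⟨m, hm, hmn⟩ : ∃ m, a m < a n / 2 ∧ n ≤ m :=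
      ((hlim.eventually (eventually_lt_nhds (half_pos hA))).and
        (eventually_ge_atTop n)).exists
    set g : ℝ := ((k:ℝ)+1) * (betaa k * a n) with hg_def
    have hkpos : (0:ℝ) < (k:ℝ) + 1 := by positivity
    have hstep : ∀ j, n ≤ j → j < m → |f (a (j+1)) - f (a j)| ≤ g := by
      intro j hj _
      have hgap : (1 - betaa k) * a j < a (j+1) := (lt_div_iff₀ (hpos j)).mp (hNr k j hj)
      have e2 : a j ≤ a n := hanti.antitone hj
      have h5 : betaa k * a j ≤ betaa k * a n :=
        mul_le_mul_of_nonneg_left e2 (betaa_pos k).le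
      have e3 : a j - a (j+1) ≤ betaa k * a n := by nlinarith [hgap]
      calc |f (a (j+1)) - f (a j)| ≤ L * |a (j+1) - a j| := (hf _ _).2
        _ = L * (a j - a (j+1)) := by
            rw [abs_sub_comm, abs_of_pos (sub_pos.mpr (hanti (Nat.lt_succ_self j)))]
        _ ≤ L * (betaa k * a n) := mul_le_mul_of_nonneg_left e3 hLpos.le
        _ ≤ g := mul_le_mul_of_nonneg_right hLk
            (mul_nonneg (betaa_pos k).le hA.le)
    have hgeta : g < eta k * s k := by
      simp only [hs_def, hg_def]
      unfold betaa
      have l1 : ((k:ℝ)+1) * (eta k / (8*((k:ℝ)+1)^2) * a n)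
          = eta k * a n / (8*((k:ℝ)+1)) := by field_simp
      have l2 : eta k * (a (N k) / (4*((k:ℝ)+1))) = eta k * a n / (4*((k:ℝ)+1)) := by
        rw [← hn_def]; ring
      rw [l1, l2]
      exact div_lt_div_of_pos_left (mul_pos (eta_pos k) hA) (by positivity) (by nlinarith)
    have hspan : 2 * s k ≤ |f (a n) - f (a m)| := by
      have h1 := (hf (a n) (a m)).1
      have habs : a n / 2 ≤ |a n - a m| := by
        rw [abs_of_pos (by linarith : (0:ℝ) < a n - a m)]
        linarith
      have hinv : ((k:ℝ)+1)⁻¹ ≤ L⁻¹ := inv_anti₀ hLpos hLk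
      have h2 : ((k:ℝ)+1)⁻¹ * (a n / 2) ≤ L⁻¹ * |a n - a m| :=
        mul_le_mul hinv habs (by positivity) (by positivity)
      refine le_trans ?_ (le_trans h2 h1)
      simp only [hs_def]
      rw [← hn_def]
      exact le_of_eq (by field_simp; ring)
    have hyE : ∀ j, f (a j) ∈ Set.Icc (0:ℝ) 1 \ ⋃ k, V k := hfa
    set p := min (f (a n)) (f (a m)) with hp_def
    set q := max (f (a n)) (f (a m)) with hq_def
    have hp0 : 0 ≤ p := le_min (hyE n).1.1 (hyE m).1.1
    have hp1 : p ≤ 1 := le_trans (min_le_left _ _) (hyE n).1.2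
    have hqp : 2 * s k ≤ q - p := by
      rw [hq_def, hp_def, max_sub_min_eq_abs, abs_sub_comm]; exact hspan
    set i := ⌈p / s k⌉₊ with hi_def
    have hic : p ≤ (i:ℝ) * s k := (div_le_iff₀ (hsk k)).mp (Nat.le_ceil (p / s k))
    have hcs : (i:ℝ) * s k < p + s k := by
      have h := Nat.ceil_lt_add_one (div_nonneg hp0 (hsk k).le)
      have h2 := mul_lt_mul_of_pos_right h (hsk k)
      rw [add_mul, div_mul_cancel₀ _ (ne_of_gt (hsk k)), one_mul] at h2
      exact h2
    have hiM : i ≤ M k := Nat.ceil_mono ((div_le_div_iff_of_pos_right (hsk k)).mpr hp1)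
    have hes : eta k * s k ≤ s k := by nlinarith [eta_le_one k, eta_pos k, hsk k]
    have hd : (i:ℝ) * s k + eta k * s k ≤ q := by linarith
    have hGapU : ∀ x : ℝ, (i:ℝ) * s k < x → x < (i:ℝ) * s k + eta k * s k →
        x ∈ ⋃ k, V k := by
      intro x hx1 hx2
      refine Set.mem_iUnion.2 ⟨k, ?_⟩
      simp only [hV_def]
      exact Set.mem_iUnion₂.mpr ⟨i, Finset.mem_range.mpr (by omega), ⟨hx1, hx2⟩⟩
    have hepos : (0:ℝ) < eta k * s k := mul_pos (eta_pos k) (hsk k)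
    rcases le_total (f (a n)) (f (a m)) with hcase | hcase
    · have hpn : p = f (a n) := min_eq_left hcase
      have hqm : q = f (a m) := max_eq_right hcase
      obtain ⟨j, hj1, hj2⟩ := chain_cross (fun j => f (a j)) g ((i:ℝ) * s k) n
        (by show f (a n) ≤ (i:ℝ) * s k; rw [← hpn]; exact hic) m hmn hstep
        (by show (i:ℝ) * s k < f (a m)
            rw [← hqm]; exact lt_of_lt_of_le (lt_add_of_pos_right _ hepos) hd)
      exact (hyE j).2 (hGapU _ hj1 (lt_of_le_of_lt hj2 (by linarith)))
    · have hpm : p = f (a m) := min_eq_right hcase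
      have hqn : q = f (a n) := max_eq_left hcase
      have hstep' : ∀ j, n ≤ j → j < m →
          |f (a (n + m - (j+1))) - f (a (n + m - j))| ≤ g := by
        intro j hj1 hj2
        have e : n + m - j = (n + m - (j+1)) + 1 := by omega
        rw [e, abs_sub_comm]
        exact hstep (n + m - (j+1)) (by omega) (by omega)
      obtain ⟨j, hj1, hj2⟩ := chain_cross (fun j => f (a (n + m - j))) g
        ((i:ℝ) * s k) n
        (by show f (a (n + m - n)) ≤ (i:ℝ) * s k
            rw [show n + m - n = m from by omega, ← hpm]; exact hic)
        m hmn hstep'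
        (by show (i:ℝ) * s k < f (a (n + m - m))
            rw [show n + m - m = n from by omega, ← hqn]
            exact lt_of_lt_of_le (lt_add_of_pos_right _ hepos) hd)
      exact (hyE (n + m - j)).2 (hGapU _ hj1 (lt_of_le_of_lt hj2 (by linarith)))
end

section
/- A set X ⊆ ℝ is full measure universal if and only if for every Lebesgue measure zero set M ⊆ ℝ there exists λ ∈ ℝ \ {0} such that X + λM ≠ ℝ. -/
open MeasureTheory Set

/-- `X` is full measure universal: every set of full Lebesgue measure contains a
nontrivial affine copy of `X`. -/
def FullMeasureUniversal (X : Set ℝ) : Prop :=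
  ∀ F : Set ℝ, volume Fᶜ = 0 → ∃ l : ℝ, l ≠ 0 ∧ ∃ t : ℝ, (fun x => l * x + t) '' X ⊆ F

theorem stmt_5 (X : Set ℝ) :
    FullMeasureUniversal X ↔
      ∀ M : Set ℝ, volume M = 0 →
        ∃ l : ℝ, l ≠ 0 ∧ Set.image2 (fun x y => x + l * y) X M ≠ Set.univ := by
  constructor
  · intro h M hM
    obtain ⟨l, hl, t, ht⟩ := h (-M)ᶜ (by rw [compl_compl, Measure.measure_neg]; exact hM)
    refine ⟨1 / l, one_div_ne_zero hl, fun hcontra => ?_⟩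
    have hz : (-(t / l)) ∈ Set.image2 (fun x y => x + (1 / l) * y) X M := by
      rw [hcontra]; exact mem_univ _
    obtain ⟨x, hx, m, hm, hxm⟩ := hz
    have hx' : l * x + t ∈ (-M)ᶜ := ht ⟨x, hx, rfl⟩
    apply hx'
    have hmeq : m = -(l * x + t) := by
      field_simp at hxm
      linarith
    show -(l * x + t) ∈ M
    rwa [hmeq] at hm
  · intro h F hF
    obtain ⟨l, hl, hne⟩ := h Fᶜ hF
    have hz : ∃ z, z ∉ Set.image2 (fun x y => x + l * y) X Fᶜ := by
      by_contra hc
      push_neg at hc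
      exact hne (eq_univ_of_forall hc)
    obtain ⟨z, hzz⟩ := hz
    refine ⟨-1 / l, div_ne_zero (neg_ne_zero.mpr one_ne_zero) hl, z / l, ?_⟩
    rintro _ ⟨x, hx, rfl⟩
    by_contra hmem
    exact hzz ⟨x, hx, -1 / l * x + z / l, hmem, by field_simp; ring⟩
end

section
/- Every countable subset X of ℝ is full measure universal. -/
open MeasureTheory Set

theorem stmt_6 (X : Set ℝ) (hX : X.Countable) : FullMeasureUniversal X := by
  intro F hF
  refine ⟨1, one_ne_zero, ?_⟩
  -- the set of good translates
  set S : Set ℝ := ⋂ x ∈ X, {t : ℝ | x + t ∈ F} with hS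
  have hSc : volume Sᶜ = 0 := by
    have : Sᶜ = ⋃ x ∈ X, {t : ℝ | x + t ∈ F}ᶜ := by
      simp [hS, compl_iInter]
    rw [this]
    refine (measure_biUnion_null_iff hX).2 ?_
    intro x _
    have : {t : ℝ | x + t ∈ F}ᶜ = (x + ·) ⁻¹' Fᶜ := rfl
    rw [this, measure_preimage_add]
    exact hF
  have hSne : S.Nonempty := by
    by_contra h
    rw [not_nonempty_iff_eq_empty] at h
    have : (volume : Measure ℝ) univ = 0 := by
      rw [← compl_empty, ← h]; exact hSc
    simpa [Real.volume_univ] using this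
  obtain ⟨t, ht⟩ := hSne
  refine ⟨t, ?_⟩
  rintro y ⟨x, hx, rfl⟩
  have := mem_iInter₂.1 ht x hx
  simpa using this
end

section
/- If an increasing sequence (a_n) of reals with a_n → ∞ satisfies inf_n (a_{n+1} − a_n) ≥ 1, then the set E = {y ∈ ℝ : the sequence (y·a_n) is not dense modulo 1} has Lebesgue measure zero. -/
/-! If `fract (y * a n)` avoids a fixed interval `(c, d) ⊆ [0, 1]`, then `y` lies outside the
intervals `((k + c) / a n, (k + d) / a n)`, `k ∈ ℤ`, which fill a proportion `d - c` of any
interval that is long compared to `1 / a n`. Letting `a n → ∞`, the set of such `y` has density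
at most `1 - (d - c) < 1` around every point, so it is null by the Lebesgue density theorem.
A non-dense sequence avoids some interval with rational endpoints, and there are countably
many of those. -/

open MeasureTheory Filter

/-- The sequence `x` is dense modulo 1: its fractional parts are dense in `[0,1)`. -/
def DenseMod1 (x : ℕ → ℝ) : Prop :=
  ∀ t ∈ Set.Ico (0 : ℝ) 1, ∀ ε > 0, ∃ n, |Int.fract (x n) - t| < ε

open Topology Set Metric

theorem measure_eq_zero_of_frequently_measure_inter_closedBall_le {β : Type*} [MetricSpace β]
    [MeasurableSpace β] [BorelSpace β] [SecondCountableTopology β] [HasBesicovitchCovering β]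
    (μ : Measure β) [IsLocallyFiniteMeasure μ] {s : Set β} {δ : ENNReal} (hδ : δ < 1)
    (h : ∀ x, ∃ᶠ r in 𝓝[>] 0, μ (s ∩ closedBall x r) ≤ δ * μ (closedBall x r)) :
    μ s = 0 := by
  have hfalse : ∀ᵐ x ∂μ.restrict s, False := by
    filter_upwards [Besicovitch.ae_tendsto_measure_inter_div μ s] with x hdensity
    obtain ⟨r, hsmall, hbig⟩ :=
      ((h x).and_eventually (hdensity.eventually (lt_mem_nhds hδ))).exists
    exact hbig.not_ge (ENNReal.div_le_of_le_mul hsmall)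
  simpa [ae_iff] using hfalse

section FractMul

variable {A c d : ℝ}

theorem floor_mul_eq_and_fract_mul_mem_Ioo (hA : 0 < A) (hc : 0 ≤ c) (hd : d ≤ 1) {k : ℤ}
    {y : ℝ} (hy : y ∈ Ioo ((k + c) / A) ((k + d) / A)) :
    ⌊y * A⌋ = k ∧ Int.fract (y * A) ∈ Ioo c d := by
  rw [mem_Ioo, div_lt_iff₀ hA, lt_div_iff₀ hA] at hy
  have hfloor : ⌊y * A⌋ = k := Int.floor_eq_iff.mpr ⟨by linarith, by linarith⟩
  refine ⟨hfloor, ?_⟩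
  rw [Int.fract, hfloor]
  constructor <;> linarith

theorem ofReal_le_volume_biUnion_Ioo (hA : 0 < A) (hc : 0 ≤ c) (hcd : c ≤ d) (hd : d ≤ 1)
    (u v : ℝ) :
    ENNReal.ofReal ((A * (v - u) - 2) * ((d - c) / A)) ≤
      volume (⋃ k ∈ Finset.Icc ⌈A * u - c⌉ ⌊A * v - d⌋, Ioo ((k + c) / A) ((k + d) / A)) := by
  have hdisj : PairwiseDisjoint (↑(Finset.Icc ⌈A * u - c⌉ ⌊A * v - d⌋))
      fun k : ℤ => Ioo ((k + c) / A) ((k + d) / A) := fun m _ m' _ hne =>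
    disjoint_left.mpr fun y hm hm' =>
      hne ((floor_mul_eq_and_fract_mul_mem_Ioo hA hc hd hm).1.symm.trans
        (floor_mul_eq_and_fract_mul_mem_Ioo hA hc hd hm').1)
  have hlength : ∀ k : ℤ, (k + d) / A - (k + c) / A = (d - c) / A := fun k => by ring
  rw [measure_biUnion_finset hdisj fun _ _ => measurableSet_Ioo]
  simp only [Real.volume_Ioo, hlength, Finset.sum_const, nsmul_eq_mul, Int.card_Icc]
  rw [← ENNReal.ofReal_natCast, ← ENNReal.ofReal_mul (Nat.cast_nonneg _)]
  have hcount : A * (v - u) - 2 ≤ (⌊A * v - d⌋ + 1 - ⌈A * u - c⌉ : ℤ) := by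
    have := Int.ceil_lt_add_one (A * u - c)
    have := Int.sub_one_lt_floor (A * v - d)
    push_cast
    linarith
  gcongr
  exact hcount.trans (mod_cast Int.self_le_toNat _)

theorem volume_setOf_fract_mul_notMem_Ioo_inter_Icc_le (hA : 0 < A) (hc : 0 ≤ c) (hcd : c ≤ d)
    (hd : d ≤ 1) (u v : ℝ) :
    volume ({y | Int.fract (y * A) ∉ Ioo c d} ∩ Icc u v) ≤
      ENNReal.ofReal ((v - u) * (1 - (d - c)) + 2 * (d - c) / A) := by
  set U := ⋃ k ∈ Finset.Icc ⌈A * u - c⌉ ⌊A * v - d⌋, Ioo ((k + c) / A) ((k + d) / A)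
  have hUsub : U ⊆ Icc u v := by
    simp only [U, iUnion_subset_iff, Finset.mem_Icc]
    intro k ⟨hlo, hhi⟩ y ⟨hy₁, hy₂⟩
    have := (Int.le_ceil _).trans (Int.cast_le.mpr hlo)
    have := (Int.cast_le.mpr hhi).trans (Int.floor_le (A * v - d))
    have hu : u ≤ (k + c) / A := by rw [le_div_iff₀ hA]; linarith
    have hv : (k + d) / A ≤ v := by rw [div_le_iff₀ hA]; linarith
    exact ⟨hu.trans hy₁.le, hy₂.le.trans hv⟩
  have hsub : {y | Int.fract (y * A) ∉ Ioo c d} ∩ Icc u v ⊆ Icc u v \ U := by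
    rintro y ⟨hy, huv⟩
    refine ⟨huv, fun hU => ?_⟩
    obtain ⟨k, -, hk⟩ := mem_iUnion₂.mp hU
    exact hy (floor_mul_eq_and_fract_mul_mem_Ioo hA hc hd hk).2
  have hU : MeasurableSet U := Finset.measurableSet_biUnion _ fun _ _ => measurableSet_Ioo
  refine (measure_mono hsub).trans ((measure_sdiff_le_iff_le_add hU.nullMeasurableSet hUsub
    ((measure_mono hUsub).trans_lt measure_Icc_lt_top).ne).mpr ?_)
  calc volume (Icc u v)
      = ENNReal.ofReal ((A * (v - u) - 2) * ((d - c) / A)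
          + ((v - u) * (1 - (d - c)) + 2 * (d - c) / A)) := by
        rw [Real.volume_Icc]
        congr 1
        field_simp
        ring
    _ ≤ volume U + ENNReal.ofReal ((v - u) * (1 - (d - c)) + 2 * (d - c) / A) :=
        ENNReal.ofReal_add_le.trans
          (add_le_add_left (ofReal_le_volume_biUnion_Ioo hA hc hcd hd u v) _)

end FractMul

theorem volume_setOf_forall_fract_mul_notMem_Ioo (a : ℕ → ℝ) (hlim : Tendsto a atTop atTop)
    {c d : ℝ} (hc : 0 ≤ c) (hcd : c < d) (hd : d ≤ 1) :
    volume {y | ∀ n, Int.fract (y * a n) ∉ Ioo c d} = 0 := by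
  set E := {y | ∀ n, Int.fract (y * a n) ∉ Ioo c d}
  have hIcc : ∀ u v, volume (E ∩ Icc u v) ≤ ENNReal.ofReal ((v - u) * (1 - (d - c))) := by
    intro u v
    have hdecay : Tendsto (fun n => 2 * (d - c) / a n) atTop (𝓝 0) :=
      tendsto_const_nhds.div_atTop hlim
    have hbound : Tendsto (fun n => ENNReal.ofReal ((v - u) * (1 - (d - c)) + 2 * (d - c) / a n))
        atTop (𝓝 (ENNReal.ofReal ((v - u) * (1 - (d - c))))) :=
      ENNReal.tendsto_ofReal (by simpa using tendsto_const_nhds.add hdecay)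
    refine ge_of_tendsto hbound ?_
    filter_upwards [hlim.eventually_gt_atTop 0] with n hn
    exact (measure_mono (inter_subset_inter_left _ fun y (hy : y ∈ E) => hy n)).trans
      (volume_setOf_fract_mul_notMem_Ioo_inter_Icc_le hn hc hcd.le hd u v)
  refine measure_eq_zero_of_frequently_measure_inter_closedBall_le volume
    (ENNReal.ofReal_lt_one.mpr (by linarith : 1 - (d - c) < 1)) fun x => ?_
  refine Eventually.frequently (eventually_nhdsWithin_of_forall fun r (hr : 0 < r) => ?_)
  rw [Real.closedBall_eq_Icc, Real.volume_Icc, ← ENNReal.ofReal_mul (by linarith)]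
  exact (hIcc _ _).trans_eq (by ring_nf)

theorem exists_rat_forall_fract_notMem_Ioo_of_not_denseMod1 {x : ℕ → ℝ} (hx : ¬ DenseMod1 x) :
    ∃ c d : ℚ, ((0 : ℝ) ≤ c ∧ (c : ℝ) < d ∧ (d : ℝ) ≤ 1) ∧
      ∀ n, Int.fract (x n) ∉ Ioo (c : ℝ) d := by
  simp only [DenseMod1, not_forall, not_exists, not_lt, exists_prop] at hx
  obtain ⟨t, ⟨ht₀, ht₁⟩, ε, hε, hfar⟩ := hx
  obtain ⟨c, hc⟩ := exists_rat_btwn (max_lt_iff.mpr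
    ⟨lt_min_iff.mpr ⟨one_pos, by linarith⟩, lt_min_iff.mpr ⟨by linarith, by linarith⟩⟩ :
      max 0 (t - ε) < min 1 (t + ε))
  obtain ⟨d, hd⟩ := exists_rat_btwn hc.2
  rw [max_lt_iff] at hc
  rw [lt_min_iff] at hd
  refine ⟨c, d, ⟨hc.1.1.le, hd.1, hd.2.1.le⟩, fun n hn => (hfar n).not_gt ?_⟩
  exact abs_sub_lt_iff.mpr ⟨by linarith [hn.2], by linarith [hn.1]⟩

theorem stmt_8_general (a : ℕ → ℝ) (hlim : Tendsto a atTop atTop) :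
    volume {y : ℝ | ¬ DenseMod1 (fun n => y * a n)} = 0 := by
  refine measure_mono_null (fun y hy => ?_) <|
    measure_iUnion_null fun c : ℚ => measure_iUnion_null fun d : ℚ =>
      measure_iUnion_null fun h : (0 : ℝ) ≤ c ∧ (c : ℝ) < d ∧ (d : ℝ) ≤ 1 =>
        volume_setOf_forall_fract_mul_notMem_Ioo a hlim h.1 h.2.1 h.2.2
  obtain ⟨c, d, h, hy⟩ := exists_rat_forall_fract_notMem_Ioo_of_not_denseMod1 hy
  exact mem_iUnion₂.mpr ⟨c, d, mem_iUnion.mpr ⟨h, hy⟩⟩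

theorem stmt_8 (a : ℕ → ℝ) (hmono : StrictMono a) (hlim : Tendsto a atTop atTop)
    (hgap : ∀ n, 1 ≤ a (n + 1) - a n) :
    volume {y : ℝ | ¬ DenseMod1 (fun n => y * a n)} = 0 :=
  stmt_8_general a hlim
end

section
/- Let (a_n) be an increasing sequence of reals with a_n → ∞ and inf_n (a_{n+1} − a_n) ≥ 1. For every 0 ≤ p < 1 there exists a p-large set E ⊆ ℝ such that for every x ∈ ℝ and Lebesgue-almost every y ∈ ℝ, the sequence (x + y·a_n) is not entirely contained in E. -/
open MeasureTheory Filter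
open scoped ENNReal

lemma vol_cover (p : ℝ) (hp0 : 0 ≤ p) (hp1 : p ≤ 1) (u v : ℝ) (huv : u ≤ v) :
    volume ((⋃ k : ℤ, Set.Icc (k:ℝ) (k+p)) ∩ Set.Icc u v) ≤ ENNReal.ofReal ((v - u + 3) * p) := by
  classical
  set F : Finset ℤ := Finset.Icc (⌊u⌋ - 1) ⌊v⌋ with hF
  have hsub : (⋃ k : ℤ, Set.Icc (k:ℝ) (k+p)) ∩ Set.Icc u v ⊆
      ⋃ k ∈ F, Set.Icc (k:ℝ) (k+p) := by
    rintro y ⟨hyE, hyu, hyv⟩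
    obtain ⟨k, hk1, hk2⟩ := Set.mem_iUnion.1 hyE
    have hkF : k ∈ F := by
      rw [hF, Finset.mem_Icc]
      constructor
      · have h1 : (⌊u⌋ : ℝ) - 1 ≤ (k : ℝ) := by nlinarith [Int.floor_le u, hp1, hyu, hk2]
        exact_mod_cast h1
      · exact Int.le_floor.2 (le_trans hk1 hyv)
    exact Set.mem_biUnion hkF ⟨hk1, hk2⟩
  calc volume ((⋃ k : ℤ, Set.Icc (k:ℝ) (k+p)) ∩ Set.Icc u v)
      ≤ volume (⋃ k ∈ F, Set.Icc (k:ℝ) (k+p)) := measure_mono hsub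
    _ ≤ ∑ k ∈ F, volume (Set.Icc (k:ℝ) (k+p)) := measure_biUnion_finset_le F _
    _ = ∑ k ∈ F, ENNReal.ofReal p := by
        refine Finset.sum_congr rfl fun k _ => ?_
        rw [Real.volume_Icc]; ring_nf
    _ = (F.card : ℝ≥0∞) * ENNReal.ofReal p := by rw [Finset.sum_const, nsmul_eq_mul]
    _ ≤ ENNReal.ofReal (v - u + 3) * ENNReal.ofReal p := by
        gcongr
        rw [show ((F.card : ℝ≥0∞)) = ENNReal.ofReal (F.card : ℝ) by
          simp [ENNReal.ofReal_natCast]]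
        apply ENNReal.ofReal_le_ofReal
        have hcard : F.card = (⌊v⌋ + 1 - (⌊u⌋ - 1)).toNat := Int.card_Icc _ _
        have huv' : ⌊u⌋ ≤ ⌊v⌋ := Int.floor_le_floor huv
        have hz : (F.card : ℤ) ≤ ⌊v⌋ - ⌊u⌋ + 2 := by rw [hcard]; omega
        have h1 : u - 1 < (⌊u⌋ : ℝ) := Int.sub_one_lt_floor u
        have h2 : (⌊v⌋ : ℝ) ≤ v := Int.floor_le v
        have hr : (F.card : ℝ) ≤ (⌊v⌋ : ℝ) - ⌊u⌋ + 2 := by exact_mod_cast hz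
        linarith
    _ = ENNReal.ofReal ((v - u + 3) * p) := by
        rw [← ENNReal.ofReal_mul (by linarith)]

/-- A measurable set `E ⊆ ℝ` is `p`-large if `m(E ∩ [k, k+1]) ≥ p` for every integer `k`. -/
def PLarge (p : ℝ) (E : Set ℝ) : Prop :=
  ∀ k : ℤ, ENNReal.ofReal p ≤ volume (E ∩ Set.Icc (k : ℝ) (k + 1))

theorem stmt_9 (a : ℕ → ℝ) (hmono : StrictMono a) (hlim : Tendsto a atTop atTop)
    (hgap : ∀ n, 1 ≤ a (n + 1) - a n) (p : ℝ) (hp0 : 0 ≤ p) (hp1 : p < 1) :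
    ∃ E : Set ℝ, MeasurableSet E ∧ PLarge p E ∧
      ∀ x : ℝ, ∀ᵐ y : ℝ, ¬ (∀ n, x + y * a n ∈ E) := by
  set E : Set ℝ := ⋃ k : ℤ, Set.Icc (k : ℝ) (k + p) with hE
  have hEmeas : MeasurableSet E := MeasurableSet.iUnion fun k => measurableSet_Icc
  refine ⟨E, hEmeas, ?_, ?_⟩
  · intro k
    have hsub : Set.Icc (k : ℝ) (k + p) ⊆ E ∩ Set.Icc (k : ℝ) (k + 1) := by
      rintro y ⟨h1, h2⟩
      exact ⟨Set.mem_iUnion.2 ⟨k, h1, h2⟩, h1, by linarith⟩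
    calc ENNReal.ofReal p = volume (Set.Icc (k : ℝ) (k + p)) := by
          rw [Real.volume_Icc]; ring_nf
      _ ≤ _ := measure_mono hsub
  · intro x
    set B : Set ℝ := {y : ℝ | ∀ n, x + y * a n ∈ E} with hBdef
    have hBmeas : MeasurableSet B := by
      have : B = ⋂ n, (fun y => x + y * a n) ⁻¹' E := by
        ext y; simp [hBdef, Set.mem_iInter]
      rw [this]
      exact MeasurableSet.iInter fun n =>
        hEmeas.preimage (by fun_prop)
    -- key estimate
    have key : ∀ (c r : ℝ), 0 < r → ∀ n, 1 ≤ a n →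
        volume (B ∩ Metric.closedBall c r) ≤ ENNReal.ofReal (p * (2 * r) + 3 / a n) := by
      intro c r hr n hn
      have ht : (0:ℝ) < a n := lt_of_lt_of_le one_pos hn
      set t := a n with htdef
      have hsub : B ∩ Metric.closedBall c r ⊆
          (fun y => x + y * t) ⁻¹' (E ∩ Set.Icc (x + (c - r) * t) (x + (c + r) * t)) := by
        rintro y ⟨hyB, hyb⟩
        rw [Real.closedBall_eq_Icc] at hyb
        obtain ⟨h1, h2⟩ := hyb
        refine ⟨hyB n, ?_, ?_⟩ <;> simp only <;> nlinarith
      have hpre : ∀ S : Set ℝ, volume ((fun y => x + y * t) ⁻¹' S)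
          = ENNReal.ofReal t⁻¹ * volume S := by
        intro S
        have : (fun y : ℝ => x + y * t) ⁻¹' S = (· * t) ⁻¹' ((x + ·) ⁻¹' S) := rfl
        rw [this, Real.volume_preimage_mul_right (ne_of_gt ht),
          measure_preimage_add volume x S, abs_of_pos (inv_pos.2 ht)]
      calc volume (B ∩ Metric.closedBall c r)
          ≤ ENNReal.ofReal t⁻¹ *
            volume (E ∩ Set.Icc (x + (c - r) * t) (x + (c + r) * t)) := by
            rw [← hpre]; exact measure_mono hsub
        _ ≤ ENNReal.ofReal t⁻¹ *
            ENNReal.ofReal ((x + (c + r) * t - (x + (c - r) * t) + 3) * p) := by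
            gcongr
            exact vol_cover p hp0 hp1.le _ _ (by nlinarith)
        _ ≤ ENNReal.ofReal (p * (2 * r) + 3 / a n) := by
            rw [← ENNReal.ofReal_mul (by positivity)]
            apply ENNReal.ofReal_le_ofReal
            have : x + (c + r) * t - (x + (c - r) * t) = 2 * r * t := by ring
            rw [this]
            rw [div_eq_mul_inv]
            have h3 : t⁻¹ * ((2 * r * t + 3) * p) = p * (2 * r) * (t * t⁻¹) + 3 * p * t⁻¹ := by
              ring
            rw [h3, mul_inv_cancel₀ (ne_of_gt ht), mul_one]
            have : 3 * p * t⁻¹ ≤ 3 * t⁻¹ := by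
              apply mul_le_mul_of_nonneg_right _ (by positivity)
              linarith
            linarith
    -- limit: for every ball, measure of B ∩ ball ≤ p * volume ball
    have key2 : ∀ (c r : ℝ), 0 < r →
        volume (B ∩ Metric.closedBall c r) ≤ ENNReal.ofReal (p * (2 * r)) := by
      intro c r hr
      have htend : Tendsto (fun n => ENNReal.ofReal (p * (2 * r) + 3 / a n)) atTop
          (nhds (ENNReal.ofReal (p * (2 * r)))) := by
        apply ENNReal.tendsto_ofReal
        have h0 : Tendsto (fun n => 3 / a n) atTop (nhds 0) :=
          Tendsto.div_atTop tendsto_const_nhds hlim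
        have := h0.const_add (p * (2 * r))
        simpa using this
      refine ge_of_tendsto htend ?_
      filter_upwards [hlim.eventually_ge_atTop 1] with n hn
      exact key c r hr n hn
    -- B has measure zero
    have hB0 : volume B = 0 := by
      by_contra h0
      have hres : volume.restrict B ≠ 0 := by
        rwa [Ne, Measure.restrict_eq_zero]
      have : (ae (volume.restrict B)).NeBot := MeasureTheory.ae_neBot.2 hres
      obtain ⟨y₀, hy₀⟩ := (Besicovitch.ae_tendsto_measure_inter_div volume B).exists
      have hub : ∀ᶠ r in nhdsWithin 0 (Set.Ioi (0:ℝ)),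
          volume (B ∩ Metric.closedBall y₀ r) / volume (Metric.closedBall y₀ r)
            ≤ ENNReal.ofReal p := by
        filter_upwards [self_mem_nhdsWithin] with r hr
        have hr : (0:ℝ) < r := hr
        apply ENNReal.div_le_of_le_mul
        calc volume (B ∩ Metric.closedBall y₀ r) ≤ ENNReal.ofReal (p * (2 * r)) :=
              key2 y₀ r hr
          _ = ENNReal.ofReal p * volume (Metric.closedBall y₀ r) := by
              rw [Real.volume_closedBall, ← ENNReal.ofReal_mul hp0]
      have hle : (1 : ℝ≥0∞) ≤ ENNReal.ofReal p := le_of_tendsto hy₀ hub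
      have : ENNReal.ofReal p < 1 := ENNReal.ofReal_lt_one.2 hp1
      exact absurd hle (not_le.2 this)
    rw [ae_iff]
    simpa [hBdef, not_not] using hB0
end

section
/- For every 0 ≤ p < 1 there exists a p-large measurable set E ⊆ ℝ that contains no infinite arithmetic progression: there are no x ∈ ℝ and y ≠ 0 such that x + y·n ∈ E for all positive integers n. -/
open MeasureTheory Filter

/-!
Take `E` to be the complement of a symmetric set of holes. Group the unit cells of `[0, ∞)` into
blocks of growing length, each block carrying a denominator `d`, and let the holes in a cell of
that block be the points `t` with `d t` within `ε = (1 - p) / 4` of an integer; they cover at most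
`4 ε = 1 - p` of the cell. Every `d` owns arbitrarily long blocks arbitrarily far out, so it
suffices that a progression `x + y n` with `y > 0` has, for some `d`, a uniformly bounded gap
between consecutive terms with `d (x + y n)` near an integer. For `y = a / b`, Dirichlet gives `q`
with `q b x` near an integer, and then `q b (x + y n) = q b x + q a n` is near one for every `n`.
For irrational `y`, Dirichlet gives `q` with `s = q y - j₀` nonzero and small, and stepping by
`s` brings any `t + m q y` near an integer within `⌈1 / |s|⌉` steps.
-/

open Set

def NearInt (ε t : ℝ) : Prop := ∃ j : ℤ, |t - j| < ε

lemma NearInt.neg {ε t : ℝ} (h : NearInt ε t) : NearInt ε (-t) := by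
  obtain ⟨j, hj⟩ := h
  exact ⟨-j, by rwa [Int.cast_neg, neg_sub_neg, abs_sub_comm]⟩

lemma NearInt.add_int {ε t : ℝ} (h : NearInt ε t) (i : ℤ) : NearInt ε (t + i) := by
  obtain ⟨j, hj⟩ := h
  exact ⟨j + i, by rwa [Int.cast_add, add_sub_add_right_eq_sub]⟩

@[simp]
lemma nearInt_neg {ε t : ℝ} : NearInt ε (-t) ↔ NearInt ε t :=
  ⟨fun h => neg_neg t ▸ h.neg, NearInt.neg⟩

lemma exists_nat_pos_nearInt_mul (θ : ℝ) {ε : ℝ} (hε : 0 < ε) :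
    ∃ q : ℕ, 0 < q ∧ NearInt ε (q * θ) := by
  obtain ⟨n, hn⟩ := exists_nat_one_div_lt hε
  obtain ⟨q, hq, -, hθ⟩ := Real.exists_nat_abs_mul_sub_round_le θ n.succ_pos
  refine ⟨q, hq, round ((q : ℝ) * θ), hθ.trans_lt (lt_of_le_of_lt ?_ hn)⟩
  gcongr
  linarith

lemma exists_nearInt_add_nat_mul {s : ℝ} (hs : s ≠ 0) (t : ℝ) :
    ∃ m : ℕ, 1 ≤ m ∧ m ≤ ⌈|s|⁻¹⌉₊ ∧ NearInt |s| (t + m * s) := by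
  wlog hs' : 0 < s generalizing s t
  · obtain ⟨m, hm1, hmN, hnear⟩ :=
      this (neg_ne_zero.2 hs) (-t) (neg_pos.2 ((not_lt.1 hs').lt_of_ne hs))
    rw [abs_neg] at hmN hnear
    refine ⟨m, hm1, hmN, ?_⟩
    rw [← nearInt_neg]
    convert hnear using 1
    ring
  set u := (⌊t⌋ + 1 : ℤ) - t with hu
  have hu0 : 0 < u := by rw [hu]; push_cast; linarith [Int.lt_floor_add_one t]
  have hu1 : u ≤ 1 := by rw [hu]; push_cast; linarith [Int.floor_le t]
  have hm1 : u ≤ ⌈u / s⌉₊ * s := (div_le_iff₀ hs').1 (Nat.le_ceil _)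
  have hm2 : ⌈u / s⌉₊ * s < u + s := by
    have := Nat.ceil_lt_add_one (div_pos hu0 hs').le
    rwa [div_add_one hs'.ne', lt_div_iff₀ hs'] at this
  refine ⟨⌈u / s⌉₊, Nat.one_le_iff_ne_zero.2 (Nat.ceil_pos.2 (by positivity)).ne',
    Nat.ceil_mono ?_, ⌊t⌋ + 1, ?_⟩
  · rw [abs_of_pos hs', ← one_div]
    gcongr
  · rw [abs_of_pos hs', abs_lt]
    constructor <;> linarith

lemma Irrational.exists_bound_nearInt_add_nat_mul {α : ℝ} (hα : Irrational α) {ε : ℝ}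
    (hε : 0 < ε) : ∃ N : ℕ, ∀ t, ∃ k : ℕ, 1 ≤ k ∧ k ≤ N ∧ NearInt ε (t + k * α) := by
  obtain ⟨q, hq, j₀, hj₀⟩ := exists_nat_pos_nearInt_mul α hε
  have hs : (q : ℝ) * α - j₀ ≠ 0 := sub_ne_zero.2 ((hα.natCast_mul hq.ne').ne_int j₀)
  refine ⟨⌈|q * α - j₀|⁻¹⌉₊ * q, fun t => ?_⟩
  obtain ⟨m, hm1, hmN, j, hj⟩ := exists_nearInt_add_nat_mul hs t
  refine ⟨m * q, Nat.one_le_iff_ne_zero.2 (by positivity), Nat.mul_le_mul_right q hmN,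
    j + m * j₀, ?_⟩
  refine lt_of_eq_of_lt ?_ (hj.trans hj₀)
  push_cast
  ring_nf

lemma exists_bound_nearInt_mul_add_nat_mul (x y : ℝ) {ε : ℝ} (hε : 0 < ε) :
    ∃ d : ℕ, 0 < d ∧ ∃ N : ℕ, ∀ m : ℕ, ∃ n : ℕ, m < n ∧ n ≤ m + N ∧
      NearInt ε (d * (x + y * n)) := by
  by_cases hy : Irrational y
  · obtain ⟨N, hN⟩ := hy.exists_bound_nearInt_add_nat_mul hε
    refine ⟨1, one_pos, N, fun m => ?_⟩
    obtain ⟨k, hk1, hkN, hnear⟩ := hN (x + y * m)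
    refine ⟨m + k, by omega, by omega, ?_⟩
    convert hnear using 1
    push_cast
    ring
  · obtain ⟨r, rfl⟩ := not_not.1 hy
    obtain ⟨q, hq, hnear⟩ := exists_nat_pos_nearInt_mul (r.den * x) hε
    refine ⟨q * r.den, by positivity, 1, fun m => ⟨m + 1, by omega, le_rfl, ?_⟩⟩
    convert hnear.add_int (q * r.num * (m + 1 : ℕ)) using 1
    have : (r.den : ℝ) * r = r.num := by exact_mod_cast Rat.den_mul_eq_num r
    push_cast
    linear_combination (q : ℝ) * (m + 1) * this

lemma volume_setOf_nearInt_mul_inter_Icc_le {d : ℕ} (hd : 0 < d) {ε : ℝ} (hε : 0 ≤ ε) (k : ℤ) :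
    volume ({t | NearInt ε (d * t)} ∩ Icc (k : ℝ) (k + 1)) ≤ ENNReal.ofReal (4 * ε) := by
  rcases lt_or_ge 1 ε with hε1 | hε1
  · calc volume ({t | NearInt ε (d * t)} ∩ Icc (k : ℝ) (k + 1))
        ≤ volume (Icc (k : ℝ) (k + 1)) := measure_mono inter_subset_right
      _ = ENNReal.ofReal 1 := by rw [Real.volume_Icc, add_sub_cancel_left]
      _ ≤ ENNReal.ofReal (4 * ε) := ENNReal.ofReal_le_ofReal (by linarith)
  have hd' : (0 : ℝ) < d := by exact_mod_cast hd
  -- Since `ε ≤ 1`, only the `d + 1` integers `j ∈ [d k, d k + d]` can be within `ε` of `d t`.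
  have cover : {t | NearInt ε (d * t)} ∩ Icc (k : ℝ) (k + 1) ⊆
      ⋃ j ∈ Finset.Icc (d * k) (d * k + d), Ioo ((j - ε) / d) ((j + ε) / d) := by
    rintro t ⟨⟨j, hj⟩, htk, htk1⟩
    rw [abs_lt] at hj
    have hj1 : ((d * k : ℤ) : ℝ) < j + 1 := by push_cast; nlinarith
    have hj2 : (j : ℝ) < (d * k + d : ℤ) + 1 := by push_cast; nlinarith
    refine mem_iUnion₂.2 ⟨j, Finset.mem_Icc.2 ⟨Int.lt_add_one_iff.1 (by exact_mod_cast hj1),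
      Int.lt_add_one_iff.1 (by exact_mod_cast hj2)⟩, ?_, ?_⟩
    · rw [div_lt_iff₀ hd']; linarith
    · rw [lt_div_iff₀ hd']; linarith
  calc volume ({t | NearInt ε (d * t)} ∩ Icc (k : ℝ) (k + 1))
      ≤ volume (⋃ j ∈ Finset.Icc (d * k) (d * k + d), Ioo ((j - ε) / d) ((j + ε) / d)) :=
        measure_mono cover
    _ ≤ ∑ j ∈ Finset.Icc (d * k) (d * k + d), volume (Ioo ((j - ε) / d) ((j + ε) / d)) :=
        measure_biUnion_finset_le _ _
    _ = ∑ _j ∈ Finset.Icc (d * k) (d * k + d), ENNReal.ofReal (2 * ε / d) := by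
        refine Finset.sum_congr rfl fun j _ => ?_
        rw [Real.volume_Ioo]
        ring_nf
    _ = ENNReal.ofReal ((d + 1) * (2 * ε / d)) := by
        rw [Finset.sum_const, Int.card_Icc, nsmul_eq_mul, ENNReal.ofReal_mul (by positivity)]
        congr
        rw [show d * k + d + 1 - d * k = ((d + 1 : ℕ) : ℤ) by push_cast; ring, Int.toNat_natCast]
        norm_cast
    _ ≤ ENNReal.ofReal (4 * ε) := by
        refine ENNReal.ofReal_le_ofReal ?_
        rw [mul_div_assoc', div_le_iff₀ hd']
        have : (1 : ℝ) ≤ d := by exact_mod_cast hd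
        nlinarith

-- The cells `[k, k + 1)` with `k ∈ [s², (s + 1)²)` form a block of length `2 s + 1`, and block `s`
-- uses the denominator `(unpair s).1 + 1`: every denominator owns arbitrarily long blocks.
def cellDenom (k : ℕ) : ℕ := (Nat.unpair (Nat.sqrt k)).1 + 1

lemma exists_cellDenom_eq_of_le_of_le (c L : ℕ) :
    ∃ K, L ≤ K ∧ ∀ k, K ≤ k → k ≤ K + L → cellDenom k = c + 1 := by
  have hL := Nat.right_le_pair c L
  refine ⟨Nat.pair c L ^ 2, by nlinarith, fun k hk1 hk2 => ?_⟩
  rw [cellDenom, ← Nat.eq_sqrt'.2 ⟨hk1, by nlinarith⟩, Nat.unpair_pair]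

def holeSet (ε : ℝ) : Set ℝ := {t | NearInt ε (cellDenom ⌊|t|⌋₊ * t)}

lemma measurableSet_holeSet (ε : ℝ) : MeasurableSet (holeSet ε) := by
  have : Measurable fun t : ℝ => (cellDenom ⌊|t|⌋₊ : ℝ) * t := by fun_prop
  simp only [holeSet, NearInt, ofPred_exists]
  exact MeasurableSet.iUnion fun j => measurableSet_lt (this.sub_const j).abs measurable_const

@[simp]
lemma neg_mem_holeSet {ε t : ℝ} : -t ∈ holeSet ε ↔ t ∈ holeSet ε := by
  simp [holeSet, mul_neg]

lemma holeSet_inter_Ico (ε : ℝ) (k : ℕ) :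
    holeSet ε ∩ Ico (k : ℝ) (k + 1) = {t | NearInt ε (cellDenom k * t)} ∩ Ico (k : ℝ) (k + 1) := by
  ext t
  refine and_congr_left fun ht => ?_
  show NearInt ε (cellDenom ⌊|t|⌋₊ * t) ↔ NearInt ε (cellDenom k * t)
  rw [abs_of_nonneg ((Nat.cast_nonneg k).trans ht.1), Nat.floor_eq_on_Ico k t ht]

lemma volume_holeSet_inter_Icc_le {ε : ℝ} (hε : 0 ≤ ε) (k : ℤ) :
    volume (holeSet ε ∩ Icc (k : ℝ) (k + 1)) ≤ ENNReal.ofReal (4 * ε) := by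
  wlog hk : 0 ≤ k generalizing k
  · have h := this (-k - 1) (by omega)
    have hneg : -(holeSet ε ∩ Icc (k : ℝ) (k + 1)) =
        holeSet ε ∩ Icc ((-k - 1 : ℤ) : ℝ) ((-k - 1 : ℤ) + 1) := by
      ext t
      simp only [Set.mem_neg, mem_inter_iff, neg_mem_holeSet, mem_Icc]
      push_cast
      constructor <;> rintro ⟨h1, h2, h3⟩ <;> exact ⟨h1, by linarith, by linarith⟩
    rwa [← hneg, Measure.measure_neg] at h
  lift k to ℕ using hk
  calc volume (holeSet ε ∩ Icc ((k : ℤ) : ℝ) ((k : ℤ) + 1))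
      = volume (holeSet ε ∩ Ico (k : ℝ) (k + 1)) :=
        measure_congr ((ae_eq_refl _).inter Ico_ae_eq_Icc).symm
    _ ≤ volume ({t | NearInt ε (cellDenom k * t)} ∩ Icc ((k : ℤ) : ℝ) ((k : ℤ) + 1)) := by
        rw [holeSet_inter_Ico]
        exact measure_mono (inter_subset_inter_right _ Ico_subset_Icc_self)
    _ ≤ ENNReal.ofReal (4 * ε) := volume_setOf_nearInt_mul_inter_Icc_le (Nat.succ_pos _) hε k

lemma exists_add_mul_mem_holeSet {ε : ℝ} (hε : 0 < ε) (x : ℝ) {y : ℝ} (hy : y ≠ 0) :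
    ∃ n : ℕ, 1 ≤ n ∧ x + y * n ∈ holeSet ε := by
  wlog hy' : 0 < y generalizing x y
  · obtain ⟨n, hn, hmem⟩ := this (-x) (neg_ne_zero.2 hy) (neg_pos.2 ((not_lt.1 hy').lt_of_ne hy))
    refine ⟨n, hn, ?_⟩
    rw [← neg_mem_holeSet]
    convert hmem using 1
    ring
  obtain ⟨d, hd, N, hN⟩ := exists_bound_nearInt_mul_add_nat_mul x y hε
  obtain ⟨K, hLK, hK⟩ := exists_cellDenom_eq_of_le_of_le (d - 1) ⌈|x| + y * N⌉₊
  have hxK : |x| + y * N ≤ K := Nat.ceil_le.1 hLK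
  -- Run the progression from its last term below `K`; the next `N` terms stay in the block.
  obtain ⟨n, hmn, hnN, hnear⟩ := hN ⌊(K - x) / y⌋₊
  have hlow : (K : ℝ) < x + y * n := by
    have h : (K - x) / y < n := (Nat.lt_floor_add_one _).trans_le (by exact_mod_cast hmn)
    rw [div_lt_iff₀ hy'] at h
    linarith
  have hup : x + y * n ≤ K + ⌈|x| + y * N⌉₊ := by
    have hxK' : 0 ≤ K - x := by linarith [le_abs_self x, mul_nonneg hy'.le (Nat.cast_nonneg' N)]
    have h : (⌊(K - x) / y⌋₊ : ℝ) * y ≤ K - x :=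
      (le_div_iff₀ hy').1 (Nat.floor_le (div_nonneg hxK' hy'.le))
    have hn : y * n ≤ y * (⌊(K - x) / y⌋₊ + N) :=
      mul_le_mul_of_nonneg_left (by exact_mod_cast hnN) hy'.le
    linarith [Nat.le_ceil (|x| + y * N), abs_nonneg x]
  have hcell : cellDenom ⌊|x + y * n|⌋₊ = d := by
    rw [abs_of_pos ((Nat.cast_nonneg K).trans_lt hlow), hK _ (Nat.le_floor hlow.le)
      (Nat.floor_le_of_le (by exact_mod_cast hup)), Nat.sub_add_cancel hd]
  refine ⟨n, by omega, ?_⟩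
  show NearInt ε (cellDenom ⌊|x + y * n|⌋₊ * (x + y * n))
  rwa [hcell]

lemma pLarge_compl_of_volume_inter_le {p : ℝ} (hp : p ≤ 1) {H : Set ℝ}
    (hH : ∀ k : ℤ, volume (H ∩ Icc (k : ℝ) (k + 1)) ≤ ENNReal.ofReal (1 - p)) : PLarge p Hᶜ := by
  intro k
  calc ENNReal.ofReal p = ENNReal.ofReal 1 - ENNReal.ofReal (1 - p) := by
        rw [← ENNReal.ofReal_sub _ (sub_nonneg.2 hp), sub_sub_cancel]
    _ ≤ volume (Icc (k : ℝ) (k + 1)) - volume (H ∩ Icc (k : ℝ) (k + 1)) := by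
        rw [Real.volume_Icc, add_sub_cancel_left]
        exact tsub_le_tsub_left (hH k) _
    _ ≤ volume (Icc (k : ℝ) (k + 1) \ (H ∩ Icc (k : ℝ) (k + 1))) := le_measure_sdiff
    _ = volume (Hᶜ ∩ Icc (k : ℝ) (k + 1)) := by
        rw [sdiff_inter_self_eq_sdiff, sdiff_eq_compl_inter]

theorem stmt_10_general (p : ℝ) (hp1 : p < 1) :
    ∃ E : Set ℝ, MeasurableSet E ∧ PLarge p E ∧
      ¬ ∃ x y : ℝ, y ≠ 0 ∧ ∀ n : ℕ, 1 ≤ n → x + y * n ∈ E := by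
  have hε : 0 < (1 - p) / 4 := by linarith
  refine ⟨(holeSet ((1 - p) / 4))ᶜ, (measurableSet_holeSet _).compl,
    pLarge_compl_of_volume_inter_le hp1.le fun k => ?_, ?_⟩
  · convert volume_holeSet_inter_Icc_le hε.le k using 2
    ring
  · rintro ⟨x, y, hy, hE⟩
    obtain ⟨n, hn, hH⟩ := exists_add_mul_mem_holeSet hε x hy
    exact hE n hn hH

theorem stmt_10 (p : ℝ) (hp0 : 0 ≤ p) (hp1 : p < 1) :
    ∃ E : Set ℝ, MeasurableSet E ∧ PLarge p E ∧
      ¬ ∃ x y : ℝ, y ≠ 0 ∧ ∀ n : ℕ, 1 ≤ n → x + y * n ∈ E :=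
  stmt_10_general p hp1
end

section
/- Let (a_n) be an increasing sequence of reals tending to ∞ and let E = {y ∈ ℝ : (y·a_n) is not dense modulo 1}. If EE⁻¹ = {x/y : x, y ∈ E, y ≠ 0} ≠ ℝ, then for every 0 ≤ p < 1 there exists a p-large set containing no affine copy of (a_n); i.e., there are no x ∈ ℝ and y ≠ 0 with x + y·a_n in the set for all n. -/
/-!
Pick `α ∉ E E⁻¹` and let `F` be the set of `t` such that neither `t` nor `t / α` has fractional
part in the window `(1 - ε, 1)`. A unit interval loses measure at most `3ε` to the first condition
and at most `ε (1 + 2 |α|)` to the second, so `F` is `p`-large once `ε` is small. If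
`x + y a_n ∈ F` for all `n`, then `y ∈ E`, since otherwise `(y a_n)` is dense modulo 1 and moves
`x + y a_n` into the first window; likewise `y / α ∈ E`, and then `α = y / (y / α) ∈ E E⁻¹`.
-/

open MeasureTheory Filter

open Set

theorem DenseMod1.exists_one_sub_lt_fract_add {s : ℕ → ℝ} (hs : DenseMod1 s) (x : ℝ) {ε : ℝ}
    (hε0 : 0 < ε) (hε1 : ε ≤ 1) : ∃ n, 1 - ε < Int.fract (x + s n) := by
  obtain ⟨n, hn⟩ := hs (Int.fract (1 - ε / 2 - x)) ⟨Int.fract_nonneg _, Int.fract_lt_one _⟩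
    (ε / 4) (by linarith)
  obtain ⟨hlo, hhi⟩ := abs_lt.1 hn
  set δ := Int.fract (s n) - Int.fract (1 - ε / 2 - x)
  -- `x + s n` is congruent mod 1 to `1 - ε / 2 + δ`, which already lies in `[0, 1)`.
  have hfract : Int.fract (x + s n) = 1 - ε / 2 + δ := by
    refine Int.fract_eq_iff.2 ⟨by linarith, by linarith, ⌊s n⌋ - ⌊1 - ε / 2 - x⌋, ?_⟩
    simp only [δ, Int.fract]
    push_cast
    ring
  exact ⟨n, by rw [hfract]; linarith⟩

theorem not_denseMod1_zero : ¬ DenseMod1 fun _ => 0 := by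
  intro h
  obtain ⟨n, hn⟩ := h (1 / 2) ⟨by norm_num, by norm_num⟩ (1 / 4) (by norm_num)
  norm_num [abs_of_pos] at hn

theorem card_Icc_floor_floor_le {c d : ℝ} (hcd : c ≤ d) :
    ((Finset.Icc ⌊c⌋ ⌊d⌋).card : ℝ) ≤ d - c + 2 := by
  have hcard : ((Finset.Icc ⌊c⌋ ⌊d⌋).card : ℤ) = ⌊d⌋ + 1 - ⌊c⌋ :=
    Int.card_Icc_of_le _ _ (by linarith [Int.floor_le_floor hcd])
  have hcard' : ((Finset.Icc ⌊c⌋ ⌊d⌋).card : ℝ) = ⌊d⌋ + 1 - ⌊c⌋ := by exact_mod_cast hcard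
  linarith [Int.floor_le d, Int.lt_floor_add_one c]

theorem volume_one_sub_lt_fract_inter_Icc_le {ε : ℝ} (hε : 0 ≤ ε) {c d : ℝ} (hcd : c ≤ d) :
    volume ({t : ℝ | 1 - ε < Int.fract t} ∩ Icc c d) ≤ ENNReal.ofReal (ε * (d - c + 2)) := by
  have hcover : {t : ℝ | 1 - ε < Int.fract t} ∩ Icc c d ⊆
      ⋃ j ∈ Finset.Icc ⌊c⌋ ⌊d⌋, Ioc ((j : ℝ) + 1 - ε) (j + 1) := by
    rintro t ⟨ht, htc, htd⟩
    refine mem_biUnion (Finset.mem_Icc.2 ⟨Int.floor_le_floor htc, Int.floor_le_floor htd⟩) ?_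
    have ht' : 1 - ε < t - ⌊t⌋ := ht
    constructor <;> linarith [Int.lt_floor_add_one t]
  calc volume ({t : ℝ | 1 - ε < Int.fract t} ∩ Icc c d)
      ≤ ∑ j ∈ Finset.Icc ⌊c⌋ ⌊d⌋, volume (Ioc ((j : ℝ) + 1 - ε) (j + 1)) :=
        (measure_mono hcover).trans (measure_biUnion_finset_le _ _)
    _ = ENNReal.ofReal ((Finset.Icc ⌊c⌋ ⌊d⌋).card * ε) := by
        simp only [Real.volume_Ioc, sub_sub_cancel, Finset.sum_const, nsmul_eq_mul]
        rw [ENNReal.ofReal_mul (by positivity), ENNReal.ofReal_natCast]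
    _ ≤ ENNReal.ofReal (ε * (d - c + 2)) :=
        ENNReal.ofReal_le_ofReal (by nlinarith [card_Icc_floor_floor_le hcd])

def fractTop (α ε : ℝ) : Set ℝ := {t | 1 - ε < Int.fract (t / α)}

theorem measurableSet_fractTop (α ε : ℝ) : MeasurableSet (fractTop α ε) :=
  measurableSet_lt measurable_const (measurable_fract.comp (measurable_id.div_const α))

theorem volume_fractTop_inter_uIcc_le {ε : ℝ} (hε0 : 0 ≤ ε) (hε1 : ε < 1) (α c d : ℝ) :
    volume (fractTop α ε ∩ uIcc c d) ≤ ENNReal.ofReal (ε * (|d - c| + 2 * |α|)) := by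
  rcases eq_or_ne α 0 with rfl | hα
  · have hempty : fractTop 0 ε = ∅ := by
      ext t
      simp [fractTop, hε1.le]
    simp [hempty]
  have hpre : fractTop α ε ∩ uIcc c d =
      (· * α⁻¹) ⁻¹' ({u | 1 - ε < Int.fract u} ∩ uIcc (c / α) (d / α)) := by
    ext t
    simp [fractTop, preimage_mul_const_uIcc (inv_ne_zero hα), div_eq_mul_inv, hα]
  have hlen : |d / α - c / α| = |d - c| / |α| := by rw [← sub_div, abs_div]
  calc volume (fractTop α ε ∩ uIcc c d)
      = ENNReal.ofReal |α| * volume ({u | 1 - ε < Int.fract u} ∩ uIcc (c / α) (d / α)) := by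
        rw [hpre, Real.volume_preimage_mul_right (inv_ne_zero hα), inv_inv]
    _ ≤ ENNReal.ofReal |α| * ENNReal.ofReal (ε * (|d / α - c / α| + 2)) := by
        rw [uIcc, abs_sub_comm, ← max_sub_min_eq_abs']
        gcongr
        exact volume_one_sub_lt_fract_inter_Icc_le hε0 inf_le_sup
    _ = ENNReal.ofReal (ε * (|d - c| + 2 * |α|)) := by
        rw [← ENNReal.ofReal_mul (abs_nonneg α), hlen]
        congr 1
        field_simp

theorem volume_Icc_inter_fractTop_one_union_le {ε : ℝ} (hε0 : 0 ≤ ε) (hε1 : ε < 1) (α k : ℝ) :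
    volume (Icc k (k + 1) ∩ (fractTop 1 ε ∪ fractTop α ε)) ≤
      ENNReal.ofReal (ε * (4 + 2 * |α|)) := by
  rw [inter_comm, union_inter_distrib_right, ← uIcc_of_le (by linarith)]
  calc volume (fractTop 1 ε ∩ uIcc k (k + 1) ∪ fractTop α ε ∩ uIcc k (k + 1))
      ≤ ENNReal.ofReal (ε * (|k + 1 - k| + 2 * |1|))
        + ENNReal.ofReal (ε * (|k + 1 - k| + 2 * |α|)) :=
        (measure_union_le _ _).trans (add_le_add
          (volume_fractTop_inter_uIcc_le hε0 hε1 _ _ _)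
          (volume_fractTop_inter_uIcc_le hε0 hε1 _ _ _))
    _ = ENNReal.ofReal (ε * (4 + 2 * |α|)) := by
        rw [← ENNReal.ofReal_add (by positivity) (by positivity)]
        congr 1
        simp only [add_sub_cancel_left, abs_one]
        ring

theorem PLarge.of_volume_Icc_diff_le {p : ℝ} (hp0 : 0 ≤ p) (hp1 : p ≤ 1) {F : Set ℝ}
    (h : ∀ k : ℤ, volume (Icc (k : ℝ) (k + 1) \ F) ≤ ENNReal.ofReal (1 - p)) : PLarge p F := by
  intro k
  have hsplit : ENNReal.ofReal p + ENNReal.ofReal (1 - p)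
      ≤ volume (F ∩ Icc (k : ℝ) (k + 1)) + ENNReal.ofReal (1 - p) :=
    calc ENNReal.ofReal p + ENNReal.ofReal (1 - p) ≤ 1 := by
          rw [← ENNReal.ofReal_add hp0 (by linarith), add_sub_cancel, ENNReal.ofReal_one]
      _ = volume (Icc (k : ℝ) (k + 1)) := by simp
      _ ≤ volume (Icc (k : ℝ) (k + 1) ∩ F) + volume (Icc (k : ℝ) (k + 1) \ F) :=
          measure_le_inter_add_sdiff _ _ _
      _ ≤ volume (F ∩ Icc (k : ℝ) (k + 1)) + ENNReal.ofReal (1 - p) := by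
          rw [inter_comm]; gcongr; exact h k
  exact (ENNReal.add_le_add_iff_right ENNReal.ofReal_ne_top).1 hsplit

theorem exists_add_mul_mem_fractTop {a : ℕ → ℝ} {α y : ℝ} (h : DenseMod1 fun n => y / α * a n)
    (x : ℝ) {ε : ℝ} (hε0 : 0 < ε) (hε1 : ε ≤ 1) : ∃ n, x + y * a n ∈ fractTop α ε := by
  obtain ⟨n, hn⟩ := h.exists_one_sub_lt_fract_add (x / α) hε0 hε1
  refine ⟨n, show 1 - ε < Int.fract ((x + y * a n) / α) from ?_⟩
  rwa [add_div, mul_div_right_comm]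

theorem notMem_or_div_notMem {E : Set ℝ} (h0 : 0 ∈ E) {α : ℝ}
    (hα : α ∉ {z : ℝ | ∃ x ∈ E, ∃ y ∈ E, y ≠ 0 ∧ z = x / y}) {y : ℝ} (hy : y ≠ 0) :
    y ∉ E ∨ y / α ∉ E := by
  by_contra! ⟨hyE, hyαE⟩
  rcases eq_or_ne α 0 with rfl | hα0
  · exact hα ⟨0, h0, y, hyE, hy, by simp⟩
  · exact hα ⟨y, hyE, y / α, hyαE, div_ne_zero hy hα0, by field_simp⟩

theorem stmt_11_general (a : ℕ → ℝ)
    (E : Set ℝ) (hE : E = {y : ℝ | ¬ DenseMod1 (fun n => y * a n)})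
    (hquot : {z : ℝ | ∃ x ∈ E, ∃ y ∈ E, y ≠ 0 ∧ z = x / y} ≠ Set.univ)
    (p : ℝ) (hp0 : 0 ≤ p) (hp1 : p < 1) :
    ∃ F : Set ℝ, MeasurableSet F ∧ PLarge p F ∧
      ¬ ∃ x y : ℝ, y ≠ 0 ∧ ∀ n, x + y * a n ∈ F := by
  obtain ⟨α, hα⟩ := (ne_univ_iff_exists_notMem _).1 hquot
  have hdense : ∀ z ∉ E, DenseMod1 fun n => z * a n := fun z hz => by simpa [hE] using hz
  have h0E : (0 : ℝ) ∈ E := by simpa [hE] using not_denseMod1_zero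
  set ε := (1 - p) / (4 + 2 * |α|)
  have hε0 : 0 < ε := div_pos (by linarith) (by positivity)
  have hε1 : ε < 1 := (div_lt_one (by positivity)).2 (by linarith [abs_nonneg α])
  refine ⟨(fractTop 1 ε ∪ fractTop α ε)ᶜ,
    ((measurableSet_fractTop 1 ε).union (measurableSet_fractTop α ε)).compl,
    PLarge.of_volume_Icc_diff_le hp0 hp1.le fun k => ?_, ?_⟩
  · rw [sdiff_compl]
    refine (volume_Icc_inter_fractTop_one_union_le hε0.le hε1 α k).trans_eq ?_
    rw [div_mul_cancel₀ _ (by positivity)]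
  · rintro ⟨x, y, hy, hmem⟩
    rcases notMem_or_div_notMem h0E hα hy with hyE | hyαE
    · obtain ⟨n, hn⟩ :=
        exists_add_mul_mem_fractTop (α := 1) (by simpa using hdense y hyE) x hε0 hε1.le
      exact hmem n (Or.inl hn)
    · obtain ⟨n, hn⟩ := exists_add_mul_mem_fractTop (hdense _ hyαE) x hε0 hε1.le
      exact hmem n (Or.inr hn)

theorem stmt_11 (a : ℕ → ℝ) (hmono : StrictMono a) (hlim : Tendsto a atTop atTop)
    (E : Set ℝ) (hE : E = {y : ℝ | ¬ DenseMod1 (fun n => y * a n)})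
    (hquot : {z : ℝ | ∃ x ∈ E, ∃ y ∈ E, y ≠ 0 ∧ z = x / y} ≠ Set.univ)
    (p : ℝ) (hp0 : 0 ≤ p) (hp1 : p < 1) :
    ∃ F : Set ℝ, MeasurableSet F ∧ PLarge p F ∧
      ¬ ∃ x y : ℝ, y ≠ 0 ∧ ∀ n, x + y * a n ∈ F :=
  stmt_11_general a E hE hquot p hp0 hp1
end

section
/- Let (a_n) be an increasing sequence of reals tending to ∞ and let C ⊂ (0, ∞) be countable. For every 0 ≤ p < 1 there exists a p-large set E ⊆ ℝ such that for every x ∈ ℝ and every y ∈ C, the sequence (x + y·a_n) is not contained in E. -/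
/-!
For a single dilation factor `y` and any `δ > 0`, cover the line by the cells `[jδ, (j+1)δ]`,
`j ∈ ℤ`, and translate the `t`-th cell (in some enumeration of `ℤ`) by a term `y a_{n_t}` so
large that the translated cells are more than one apart. Their union `G` meets every unit
interval in measure at most `δ`, yet every orbit `x + y a_n` enters `G`. Choosing such sets
for all `y ∈ C` with `δ_y` summing to less than `1 - p`, the complement of their union is
`p`-large and contains no orbit.
-/

open MeasureTheory Filter

open Set

lemma exists_seq_add_le_succ (c : ℕ → ℝ) {b : ℕ → ℝ} (hb : Tendsto b atTop atTop)
    (D : ℝ) : ∃ φ : ℕ → ℕ, ∀ t, c t + b (φ t) + D ≤ c (t + 1) + b (φ (t + 1)) := by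
  choose g hg using fun R : ℝ => (hb.eventually_ge_atTop R).exists
  let φ : ℕ → ℕ := fun t => Nat.rec 0 (fun t n => g (c t + b n + D - c (t + 1))) t
  refine ⟨φ, fun t => ?_⟩
  have := hg (c t + b (φ t) + D - c (t + 1))
  change _ ≤ c (t + 1) + b (g _)
  linarith

lemma add_le_of_add_le_succ {α : Type*} [AddCommMonoid α] [PartialOrder α]
    [IsOrderedAddMonoid α] {L : ℕ → α} {D : α} (hD : 0 ≤ D)
    (h : ∀ t, L t + D ≤ L (t + 1)) {t t' : ℕ} (htt' : t < t') : L t + D ≤ L t' := by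
  induction t', htt' using Nat.le_induction with
  | base => exact h t
  | succ s _ ih => exact ih.trans ((le_add_of_nonneg_right hD).trans (h s))

lemma measure_iUnion_inter_le_of_subsingleton {α ι : Type*} [MeasurableSpace α] (μ : Measure α)
    {J : ι → Set α} {S : Set α} (hJ : {t | (J t ∩ S).Nonempty}.Subsingleton) {r : ENNReal}
    (hr : ∀ t, μ (J t) ≤ r) : μ ((⋃ t, J t) ∩ S) ≤ r := by
  by_cases hex : ∃ t, (J t ∩ S).Nonempty
  · obtain ⟨t₀, ht₀⟩ := hex
    refine (measure_mono ?_).trans (hr t₀)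
    rw [iUnion_inter]
    refine iUnion_subset fun t z hz => ?_
    rw [hJ ⟨z, hz⟩ ht₀] at hz
    exact hz.1
  · push Not at hex
    simp [iUnion_inter, hex]

lemma exists_measurableSet_measure_inter_Icc_le_forall_exists_add_mem {b : ℕ → ℝ}
    (hb : Tendsto b atTop atTop) {δ : ℝ} (hδ : 0 < δ) :
    ∃ G : Set ℝ, MeasurableSet G ∧
      (∀ u : ℝ, volume (G ∩ Icc u (u + 1)) ≤ ENNReal.ofReal δ) ∧
      ∀ x : ℝ, ∃ n, x + b n ∈ G := by
  let e : ℕ ≃ ℤ := (Denumerable.eqv ℤ).symm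
  obtain ⟨φ, hφ⟩ := exists_seq_add_le_succ (fun t => (e t : ℝ) * δ) hb (δ + 2)
  set L : ℕ → ℝ := fun t => (e t : ℝ) * δ + b (φ t)
  have hsep {t t'} (htt' : t < t') : L t + (δ + 2) ≤ L t' :=
    add_le_of_add_le_succ (by linarith) hφ htt'
  refine ⟨⋃ t, Icc (L t) (L t + δ), .iUnion fun _ => measurableSet_Icc, fun u => ?_,
    fun x => ?_⟩
  · refine measure_iUnion_inter_le_of_subsingleton _ ?_ fun t => by simp
    rintro t ⟨z, hzJ, hzI⟩ t' ⟨w, hwJ, hwI⟩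
    rw [mem_Icc] at hzJ hzI hwJ hwI
    rcases lt_trichotomy t t' with h | h | h
    · linarith [hsep h]
    · exact h
    · linarith [hsep h]
  · obtain ⟨j, hj, -⟩ := existsUnique_sub_zsmul_mem_Ico hδ x 0
    refine ⟨φ (e.symm j), mem_iUnion.2 ⟨e.symm j, ?_⟩⟩
    rw [zsmul_eq_mul, zero_add, mem_Ico] at hj
    simp only [L, Equiv.apply_symm_apply, mem_Icc]
    constructor <;> linarith

lemma pLarge_compl_of_measure_inter_le {p : ℝ} (hp : p ≤ 1) {U : Set ℝ}
    (hU : ∀ k : ℤ, volume (U ∩ Icc (k : ℝ) (k + 1)) ≤ ENNReal.ofReal (1 - p)) :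
    PLarge p Uᶜ := by
  intro k
  set I := Icc (k : ℝ) (k + 1)
  calc ENNReal.ofReal p = volume I - ENNReal.ofReal (1 - p) := by
        rw [Real.volume_Icc, ← ENNReal.ofReal_sub _ (by linarith)]
        ring_nf
    _ ≤ volume I - volume (U ∩ I) := tsub_le_tsub_left (hU k) _
    _ ≤ volume (I \ (U ∩ I)) := le_measure_sdiff
    _ = volume (Uᶜ ∩ I) := by rw [sdiff_inter_self_eq_sdiff, sdiff_eq_compl_inter]

theorem stmt_12_general (a : ℕ → ℝ) (hlim : Tendsto a atTop atTop)
    (C : Set ℝ) (hC : C.Countable) (hCpos : C ⊆ Set.Ioi 0)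
    (p : ℝ) (hp1 : p < 1) :
    ∃ E : Set ℝ, MeasurableSet E ∧ PLarge p E ∧
      ∀ x : ℝ, ∀ y ∈ C, ¬ (∀ n, x + y * a n ∈ E) := by
  have := hC.to_subtype
  obtain ⟨ε, hεpos, hεsum⟩ := ENNReal.exists_pos_sum_of_countable
    (ENNReal.ofReal_pos.2 (sub_pos.2 hp1)).ne' C
  choose G hGm hGthin hGhit using fun y : C =>
    exists_measurableSet_measure_inter_Icc_le_forall_exists_add_mem
      (hlim.const_mul_atTop (hCpos y.2)) (NNReal.coe_pos.2 (hεpos y))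
  refine ⟨(⋃ y, G y)ᶜ, (MeasurableSet.iUnion hGm).compl,
    pLarge_compl_of_measure_inter_le hp1.le fun k => ?_, fun x y hy hall => ?_⟩
  · calc volume ((⋃ y, G y) ∩ Icc (k : ℝ) (k + 1))
        = volume (⋃ y, G y ∩ Icc (k : ℝ) (k + 1)) := by rw [iUnion_inter]
      _ ≤ ∑' y, volume (G y ∩ Icc (k : ℝ) (k + 1)) := measure_iUnion_le _
      _ ≤ ∑' y, (ε y : ENNReal) :=
          ENNReal.tsum_le_tsum fun y => (hGthin y k).trans_eq ENNReal.ofReal_coe_nnreal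
      _ ≤ ENNReal.ofReal (1 - p) := hεsum.le
  · obtain ⟨n, hn⟩ := hGhit ⟨y, hy⟩ x
    exact hall n (mem_iUnion.2 ⟨_, hn⟩)

theorem stmt_12 (a : ℕ → ℝ) (hmono : StrictMono a) (hlim : Tendsto a atTop atTop)
    (C : Set ℝ) (hC : C.Countable) (hCpos : C ⊆ Set.Ioi 0)
    (p : ℝ) (hp0 : 0 ≤ p) (hp1 : p < 1) :
    ∃ E : Set ℝ, MeasurableSet E ∧ PLarge p E ∧
      ∀ x : ℝ, ∀ y ∈ C, ¬ (∀ n, x + y * a n ∈ E) :=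
  stmt_12_general a hlim C hC hCpos p hp1
end

section
/- Containment lemma: Let K and K̃ be Cantor sets in ℝ (compact, perfect, totally disconnected) with binary interval decompositions I_σ(K) and I_σ(K̃) indexed by finite binary words σ. If the convex hull of K is contained in the convex hull of K̃, and for every n ∈ ℕ, max{|U_σ(K̃)| : σ ∈ {0,1}^n} < min{|U_σ(K)| : σ ∈ {0,1}^n}, where U_σ denotes the largest gap inside I_σ, then K ∩ K̃ ≠ ∅. -/
open Set

/-- A set `K ⊆ ℝ` is a Cantor set: nonempty, compact, perfect (no isolated points) and
totally disconnected. -/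
def IsCantorSet (K : Set ℝ) : Prop :=
  K.Nonempty ∧ IsCompact K ∧ Perfect K ∧ IsTotallyDisconnected K

/-- The standard binary interval decomposition of a Cantor set `K ⊆ ℝ`, indexed by finite
binary words.  `Icc (a σ) (b σ)` is the basic interval `I_σ(K)` and `Ioo (c σ) (d σ)` is
`U_σ(K)`, the largest gap of `K` inside `I_σ(K)`. -/
structure CantorDecomp (K : Set ℝ) where
  a : List Bool → ℝ
  b : List Bool → ℝ
  c : List Bool → ℝ
  d : List Bool → ℝ
  le_c : ∀ σ, a σ ≤ c σ
  c_lt_d : ∀ σ, c σ < d σ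
  d_le : ∀ σ, d σ ≤ b σ
  hull : Set.Icc (a []) (b []) = convexHull ℝ K
  left_a : ∀ σ, a (σ ++ [false]) = a σ
  left_b : ∀ σ, b (σ ++ [false]) = c σ
  right_a : ∀ σ, a (σ ++ [true]) = d σ
  right_b : ∀ σ, b (σ ++ [true]) = b σ
  gap_disjoint : ∀ σ, Set.Ioo (c σ) (d σ) ∩ K = ∅
  inter : K = ⋂ n : ℕ, ⋃ σ ∈ {σ : List Bool | σ.length = n}, Set.Icc (a σ) (b σ)
  largest_gap : ∀ σ, ∀ x y : ℝ, a σ ≤ x → y ≤ b σ → Set.Ioo x y ∩ K = ∅ →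
    y - x ≤ d σ - c σ

theorem stmt_13 (K Kt : Set ℝ) (hK : IsCantorSet K) (hKt : IsCantorSet Kt)
    (D : CantorDecomp K) (Dt : CantorDecomp Kt)
    (hhull : Set.Icc (D.a []) (D.b []) ⊆ Set.Icc (Dt.a []) (Dt.b []))
    (hgaps : ∀ n : ℕ, ∀ σ τ : List Bool, σ.length = n → τ.length = n →
      Dt.d σ - Dt.c σ < D.d τ - D.c τ) :
    (K ∩ Kt).Nonempty := by
  classical
  have hab : ∀ σ, D.a σ ≤ D.b σ := fun σ =>
    (D.le_c σ).trans ((D.c_lt_d σ).le.trans (D.d_le σ))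
  have h0 : Dt.a [] ≤ D.a [] ∧ D.b [] ≤ Dt.b [] := by
    have h1 := hhull ⟨le_refl _, hab []⟩
    have h2 := hhull ⟨hab [], le_refl _⟩
    exact ⟨h1.1, h2.2⟩
  set f : ℕ → List Bool × List Bool := fun n => Nat.rec ([], [])
    (fun _ p => if D.c p.1 ≤ Dt.c p.2 then (p.1 ++ [false], p.2 ++ [false])
      else (p.1 ++ [true], p.2 ++ [true])) n with hf
  have hfs : ∀ n, f (n+1) = if D.c (f n).1 ≤ Dt.c (f n).2 then
      ((f n).1 ++ [false], (f n).2 ++ [false])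
    else ((f n).1 ++ [true], (f n).2 ++ [true]) := fun n => rfl
  have hlen : ∀ n, ((f n).1.length = n ∧ (f n).2.length = n) := by
    intro n; induction n with
    | zero => exact ⟨rfl, rfl⟩
    | succ n ih => rw [hfs n]; split <;> simp [ih.1, ih.2]
  have hinv : ∀ n, Dt.a (f n).2 ≤ D.a (f n).1 ∧ D.b (f n).1 ≤ Dt.b (f n).2 := by
    intro n; induction n with
    | zero => exact h0
    | succ n ih =>
      rw [hfs n]
      split
      next h =>
        simp only [D.left_a, D.left_b, Dt.left_a, Dt.left_b]
        exact ⟨ih.1, h⟩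
      next h =>
        have hg := hgaps n (f n).2 (f n).1 (hlen n).2 (hlen n).1
        push_neg at h
        simp only [D.right_a, D.right_b, Dt.right_a, Dt.right_b]
        exact ⟨by linarith, ih.2⟩
  have hA : Monotone fun n => D.a (f n).1 := by
    apply monotone_nat_of_le_succ
    intro n
    rw [hfs n]; split
    · simp [D.left_a]
    · simp only [D.right_a]
      exact le_trans (D.le_c _) (D.c_lt_d _).le
  have hB : Antitone fun n => D.b (f n).1 := by
    apply antitone_nat_of_succ_le
    intro n
    rw [hfs n]; split
    · simp only [D.left_b]
      exact le_trans (D.c_lt_d _).le (D.d_le _)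
    · simp [D.right_b]
  have hAB : ∀ m n, D.a (f m).1 ≤ D.b (f n).1 := by
    intro m n
    calc D.a (f m).1 ≤ D.a (f (max m n)).1 := hA (le_max_left m n)
      _ ≤ D.b (f (max m n)).1 := hab _
      _ ≤ D.b (f n).1 := hB (le_max_right m n)
  set x := ⨆ n, D.a (f n).1 with hx
  have hbdd : BddAbove (Set.range fun n => D.a (f n).1) := by
    refine ⟨D.b (f 0).1, ?_⟩
    rintro y ⟨m, rfl⟩
    exact hAB m 0
  have hxmem : ∀ n, D.a (f n).1 ≤ x ∧ x ≤ D.b (f n).1 := by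
    intro n
    exact ⟨le_ciSup hbdd n, ciSup_le fun m => hAB m n⟩
  refine ⟨x, ?_, ?_⟩
  · rw [D.inter]
    refine mem_iInter.2 fun n => ?_
    exact mem_biUnion (hlen n).1 ⟨(hxmem n).1, (hxmem n).2⟩
  · rw [Dt.inter]
    refine mem_iInter.2 fun n => ?_
    exact mem_biUnion (hlen n).2
      ⟨le_trans (hinv n).1 (hxmem n).1, le_trans (hxmem n).2 (hinv n).2⟩
end

section
/- Let (a_n) be an increasing sequence of reals tending to ∞. Suppose for each 0 ≤ p < 1 there exists a p-large set containing no affine copy of (a_n). Then there exists a measurable set F ⊆ ℝ with lim_{k→∞} m(F ∩ [k, k+1]) = 1 containing no affine copy of (a_n); i.e., no x ∈ ℝ, y ≠ 0 satisfy x + y·a_n ∈ F for all n. -/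
open MeasureTheory Filter
open scoped ENNReal

/-!
Take avoiding sets `E j` that are `(1 - 2⁻ʲ)`-large and enlarge their complements to open sets
`U j` of measure at most `6 · 2⁻ʲ` on every unit interval. Every affine copy meets every `U j`; by
compactness, the copies whose parameters `(x, y)` range over a compact set avoiding `y = 0` all
meet `U j` inside one bounded window `(-T j, T j)`. Removing `B = ⋃ j, U j ∩ (-T j, T j)` from `ℝ`
destroys every copy, while on `[k, k + 1]` with `k ≥ T 0, …, T (J - 1)` only the `U j` with
`j ≥ J` meet `B`, so there the measure of `B` is at most a tail of a convergent series.
-/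

open scoped Topology
open Set

lemma volume_compl_inter_Icc_add_one {E : Set ℝ} (hE : MeasurableSet E) (a : ℝ) :
    volume (Eᶜ ∩ Icc a (a + 1)) = 1 - volume (E ∩ Icc a (a + 1)) := by
  have hsplit := measure_inter_add_sdiff (μ := volume) (Icc a (a + 1)) hE
  rw [Real.volume_Icc, add_sub_cancel_left, ENNReal.ofReal_one] at hsplit
  refine ENNReal.eq_sub_of_add_eq (measure_inter_ne_top_of_right_ne_top measure_Icc_lt_top.ne) ?_
  rw [inter_comm E, inter_comm Eᶜ, ← sdiff_eq, add_comm, hsplit]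

lemma PLarge.volume_compl_inter_Icc_le {p : ℝ} {E : Set ℝ} (hE : PLarge p E)
    (hEm : MeasurableSet E) (hp : 0 ≤ p) (k : ℤ) :
    volume (Eᶜ ∩ Icc (k : ℝ) (k + 1)) ≤ ENNReal.ofReal (1 - p) := by
  rw [volume_compl_inter_Icc_add_one hEm, ENNReal.ofReal_sub _ hp, ENNReal.ofReal_one]
  exact tsub_le_tsub_left (hE k) 1

lemma exists_isOpen_superset_volume_inter_Icc_le {A : Set ℝ} {ε : ℝ≥0∞} (hε : ε ≠ 0)
    (hA : ∀ k : ℤ, volume (A ∩ Icc (k : ℝ) (k + 1)) ≤ ε) :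
    ∃ U, IsOpen U ∧ A ⊆ U ∧ ∀ k : ℤ, volume (U ∩ Icc (k : ℝ) (k + 1)) ≤ 6 * ε := by
  have hV : ∀ k : ℤ, ∃ V, IsOpen V ∧ A ∩ Icc (k : ℝ) (k + 1) ⊆ V ∧
      V ⊆ Ioo ((k : ℝ) - 1) (k + 2) ∧ volume V ≤ 2 * ε := by
    intro k
    obtain ⟨V, hAV, hVo, hVε⟩ := (A ∩ Icc (k : ℝ) (k + 1)).exists_isOpen_lt_add (μ := volume)
      (measure_inter_ne_top_of_right_ne_top measure_Icc_lt_top.ne) hε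
    refine ⟨V ∩ Ioo ((k : ℝ) - 1) (k + 2), hVo.inter isOpen_Ioo,
      subset_inter hAV fun x hx => ⟨by linarith [hx.2.1], by linarith [hx.2.2]⟩,
      inter_subset_right, ?_⟩
    calc volume (V ∩ Ioo ((k : ℝ) - 1) (k + 2)) ≤ volume V := measure_mono inter_subset_left
      _ ≤ ε + ε := hVε.le.trans (add_le_add_left (hA k) ε)
      _ = 2 * ε := (two_mul ε).symm
  choose V hVo hAV hVloc hVε using hV
  refine ⟨⋃ k, V k, isOpen_iUnion hVo, fun x hx => ?_, fun k => ?_⟩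
  · refine mem_iUnion.2 ⟨⌊x⌋, hAV ⌊x⌋ ⟨hx, Int.floor_le x, ?_⟩⟩
    exact_mod_cast (Int.lt_floor_add_one x).le
  -- Since `V s ⊆ (s - 1, s + 2)`, only `V (k - 1)`, `V k`, `V (k + 1)` meet `[k, k + 1]`.
  have hnear : (⋃ s, V s) ∩ Icc (k : ℝ) (k + 1) ⊆ ⋃ s ∈ Finset.Icc (k - 1) (k + 1), V s := by
    rintro x ⟨hx, hxk, hxk'⟩
    obtain ⟨s, hs⟩ := mem_iUnion.1 hx
    have hlo : (k : ℝ) < s + 2 := hxk.trans_lt (hVloc s hs).2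
    have hhi : (s : ℝ) < k + 2 := by linarith [(hVloc s hs).1]
    have hlo' : k < s + 2 := by exact_mod_cast hlo
    have hhi' : s < k + 2 := by exact_mod_cast hhi
    exact mem_biUnion (Finset.mem_Icc.2 ⟨by omega, by omega⟩) hs
  calc volume ((⋃ s, V s) ∩ Icc (k : ℝ) (k + 1))
      ≤ ∑ s ∈ Finset.Icc (k - 1) (k + 1), volume (V s) :=
        (measure_mono hnear).trans (measure_biUnion_finset_le _ _)
    _ ≤ ∑ s ∈ Finset.Icc (k - 1) (k + 1), 2 * ε := Finset.sum_le_sum fun s _ => hVε s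
    _ = 6 * ε := by
        rw [Finset.sum_const, Int.card_Icc, show (k + 1 + 1 - (k - 1)).toNat = 3 by omega,
          nsmul_eq_mul, ← mul_assoc]
        norm_num

lemma PLarge.exists_isOpen_forall_exists_mem {p : ℝ} {E : Set ℝ} {a : ℕ → ℝ} (hE : PLarge p E)
    (hp : 0 ≤ p) (hp1 : p < 1) (hEm : MeasurableSet E)
    (hEa : ¬ ∃ x y : ℝ, y ≠ 0 ∧ ∀ n, x + y * a n ∈ E) :
    ∃ U, IsOpen U ∧ (∀ x y : ℝ, y ≠ 0 → ∃ n, x + y * a n ∈ U) ∧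
      ∀ k : ℤ, volume (U ∩ Icc (k : ℝ) (k + 1)) ≤ 6 * ENNReal.ofReal (1 - p) := by
  obtain ⟨U, hUo, hEU, hUvol⟩ := exists_isOpen_superset_volume_inter_Icc_le
    (ENNReal.ofReal_pos.2 (sub_pos.2 hp1)).ne' (hE.volume_compl_inter_Icc_le hEm hp)
  refine ⟨U, hUo, fun x y hy => ?_, hUvol⟩
  by_contra! hcopy
  exact hEa ⟨x, y, hy, fun n => not_not.1 fun hn => hcopy n (hEU (mem_compl hn))⟩

lemma tendsto_volume_iUnion_inter_Ioo_inter_Icc {U : ℕ → Set ℝ} {δ : ℕ → ℝ≥0∞}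
    (hδ : ∑' j, δ j ≠ ∞) (hU : ∀ j (k : ℕ), volume (U j ∩ Icc (k : ℝ) (k + 1)) ≤ δ j)
    (T : ℕ → ℝ) :
    Tendsto (fun k : ℕ => volume ((⋃ j, U j ∩ Ioo (-T j) (T j)) ∩ Icc (k : ℝ) (k + 1)))
      atTop (𝓝 0) := by
  rw [ENNReal.tendsto_nhds_zero]
  intro η hη
  obtain ⟨J, hJ⟩ := ((ENNReal.tendsto_sum_nat_add δ hδ).eventually (ge_mem_nhds hη)).exists
  have hfar : ∀ᶠ k : ℕ in atTop, ∀ j ∈ Finset.range J, T j ≤ k :=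
    (Finset.eventually_all _).2 fun j _ => tendsto_natCast_atTop_atTop.eventually_ge_atTop _
  filter_upwards [hfar] with k hk
  have htail : (⋃ j, U j ∩ Ioo (-T j) (T j)) ∩ Icc (k : ℝ) (k + 1) ⊆
      ⋃ i, U (i + J) ∩ Icc (k : ℝ) (k + 1) := by
    rintro x ⟨hx, hxk⟩
    obtain ⟨j, hxU, hxT⟩ := mem_iUnion.1 hx
    have hJj : J ≤ j := by
      by_contra! hj
      linarith [hk j (Finset.mem_range.2 hj), hxT.2, hxk.1]
    exact mem_iUnion.2 ⟨j - J, by rwa [Nat.sub_add_cancel hJj], hxk⟩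
  calc _ ≤ ∑' i, volume (U (i + J) ∩ Icc (k : ℝ) (k + 1)) :=
        (measure_mono htail).trans (measure_iUnion_le _)
    _ ≤ ∑' i, δ (i + J) := ENNReal.tsum_le_tsum fun i => hU _ k
    _ ≤ η := hJ

lemma tendsto_volume_compl_inter_Icc_of_tendsto {B : Set ℝ} (hB : MeasurableSet B)
    (h : Tendsto (fun k : ℕ => volume (B ∩ Icc (k : ℝ) (k + 1))) atTop (𝓝 0)) :
    Tendsto (fun k : ℕ => volume (Bᶜ ∩ Icc (k : ℝ) (k + 1))) atTop (𝓝 1) := by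
  simpa [volume_compl_inter_Icc_add_one hB] using
    ENNReal.Tendsto.sub tendsto_const_nhds h (Or.inl ENNReal.one_ne_top)

lemma IsCompact.exists_forall_exists_mem_inter_Ioo {X ι : Type*} [TopologicalSpace X] {K : Set X}
    (hK : IsCompact K) {f : ι → X → ℝ} (hf : ∀ i, Continuous (f i)) {U : Set ℝ} (hU : IsOpen U)
    (hKU : ∀ q ∈ K, ∃ i, f i q ∈ U) : ∃ T : ℝ, ∀ q ∈ K, ∃ i, f i q ∈ U ∩ Ioo (-T) T := by
  obtain ⟨N, hN⟩ := hK.elim_directed_cover (fun N : ℕ => ⋃ i, f i ⁻¹' (U ∩ Ioo (-N) N))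
    (fun N => isOpen_iUnion fun i => (hU.inter isOpen_Ioo).preimage (hf i))
    (fun q hq => by
      obtain ⟨i, hi⟩ := hKU q hq
      obtain ⟨N, hN⟩ := exists_nat_gt |f i q|
      exact mem_iUnion.2 ⟨N, mem_iUnion.2 ⟨i, hi, abs_lt.1 hN⟩⟩)
    (Monotone.directed_le fun M N hMN => iUnion_mono fun i => preimage_mono <|
      inter_subset_inter_right _ <| Ioo_subset_Ioo (by simpa using hMN) (by simpa using hMN))
  exact ⟨N, fun q hq => mem_iUnion.1 (hN hq)⟩

/-- A compact exhaustion of the parameters `(x, y)`, `y ≠ 0`, of affine copies `x + y * a n`. -/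
def affineParams (j : ℕ) : Set (ℝ × ℝ) := {q | |q.1| ≤ j ∧ |q.2| ≤ j ∧ 1 ≤ j * |q.2|}

lemma isCompact_affineParams (j : ℕ) : IsCompact (affineParams j) := by
  have hclosed : IsClosed (affineParams j) := by
    simp only [affineParams, ofPred_and]
    exact (isClosed_le (by fun_prop) (by fun_prop)).inter
      ((isClosed_le (by fun_prop) (by fun_prop)).inter (isClosed_le (by fun_prop) (by fun_prop)))
  exact (isCompact_Icc.prod isCompact_Icc).of_isClosed_subset hclosed
    fun q hq => ⟨abs_le.1 hq.1, abs_le.1 hq.2.1⟩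

lemma ne_zero_of_mem_affineParams {j : ℕ} {q : ℝ × ℝ} (hq : q ∈ affineParams j) : q.2 ≠ 0 := by
  intro h
  have hj := hq.2.2
  norm_num [h] at hj

lemma exists_mem_affineParams {x y : ℝ} (hy : y ≠ 0) : ∃ j, (x, y) ∈ affineParams j := by
  obtain ⟨j, hj⟩ := exists_nat_ge (max |x| (max |y| |y|⁻¹))
  refine ⟨j, (le_max_left _ _).trans hj, ((le_max_left _ _).trans (le_max_right _ _)).trans hj, ?_⟩
  calc (1 : ℝ) = |y|⁻¹ * |y| := (inv_mul_cancel₀ (abs_ne_zero.2 hy)).symm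
    _ ≤ j * |y| := mul_le_mul_of_nonneg_right
        (((le_max_right _ _).trans (le_max_right _ _)).trans hj) (abs_nonneg y)

theorem stmt_15_general (a : ℕ → ℝ)
    (H : ∀ p : ℝ, 0 ≤ p → p < 1 → ∃ E : Set ℝ, MeasurableSet E ∧ PLarge p E ∧
      ¬ ∃ x y : ℝ, y ≠ 0 ∧ ∀ n, x + y * a n ∈ E) :
    ∃ F : Set ℝ, MeasurableSet F ∧
      Tendsto (fun k : ℕ => volume (F ∩ Set.Icc (k : ℝ) (k + 1))) atTop (nhds 1) ∧
      ¬ ∃ x y : ℝ, y ≠ 0 ∧ ∀ n, x + y * a n ∈ F := by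
  have hU : ∀ j : ℕ, ∃ U, IsOpen U ∧ (∀ x y : ℝ, y ≠ 0 → ∃ n, x + y * a n ∈ U) ∧
      ∀ k : ℤ, volume (U ∩ Icc (k : ℝ) (k + 1)) ≤ 6 * ENNReal.ofReal ((1 / 2) ^ j) := fun j => by
    have hε : (0 : ℝ) < (1 / 2) ^ j := by positivity
    have hε1 : ((1 : ℝ) / 2) ^ j ≤ 1 := pow_le_one₀ (by norm_num) (by norm_num)
    obtain ⟨E, hEm, hEl, hEa⟩ := H (1 - (1 / 2) ^ j) (by linarith) (by linarith)
    simpa using hEl.exists_isOpen_forall_exists_mem (by linarith) (by linarith) hEm hEa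
  choose U hUo hUcopy hUvol using hU
  choose T hT using fun j => (isCompact_affineParams j).exists_forall_exists_mem_inter_Ioo
    (f := fun n q => q.1 + q.2 * a n) (by fun_prop) (hUo j)
    fun q hq => hUcopy j q.1 q.2 (ne_zero_of_mem_affineParams hq)
  set B := ⋃ j, U j ∩ Ioo (-T j) (T j)
  have hB : MeasurableSet B :=
    MeasurableSet.iUnion fun j => (hUo j).measurableSet.inter measurableSet_Ioo
  refine ⟨Bᶜ, hB.compl, ?_, ?_⟩
  · have hδ : ∑' j : ℕ, 6 * ENNReal.ofReal ((1 / 2) ^ j) ≠ ∞ := by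
      rw [ENNReal.tsum_mul_left, ← ENNReal.ofReal_tsum_of_nonneg (fun j => by positivity)
        summable_geometric_two]
      exact ENNReal.mul_ne_top (by norm_num) ENNReal.ofReal_ne_top
    exact tendsto_volume_compl_inter_Icc_of_tendsto hB <|
      tendsto_volume_iUnion_inter_Ioo_inter_Icc hδ (fun j k => by exact_mod_cast hUvol j k) T
  · rintro ⟨x, y, hy, hxy⟩
    obtain ⟨j, hj⟩ := exists_mem_affineParams (x := x) hy
    obtain ⟨n, hn⟩ := hT j (x, y) hj
    exact hxy n (mem_iUnion_of_mem j hn)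

theorem stmt_15 (a : ℕ → ℝ) (hmono : StrictMono a) (hlim : Tendsto a atTop atTop)
    (H : ∀ p : ℝ, 0 ≤ p → p < 1 → ∃ E : Set ℝ, MeasurableSet E ∧ PLarge p E ∧
      ¬ ∃ x y : ℝ, y ≠ 0 ∧ ∀ n, x + y * a n ∈ E) :
    ∃ F : Set ℝ, MeasurableSet F ∧
      Tendsto (fun k : ℕ => volume (F ∩ Set.Icc (k : ℝ) (k + 1))) atTop (nhds 1) ∧
      ¬ ∃ x y : ℝ, y ≠ 0 ∧ ∀ n, x + y * a n ∈ F :=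
  stmt_15_general a H
end

section
/- Newhouse gap lemma: Let K₁ and K₂ be Cantor sets in ℝ with Newhouse thicknesses satisfying τ(K₁)·τ(K₂) ≥ 1. If K₁ is not contained in any gap or unbounded complementary component of K₂ and K₂ is not contained in any gap or unbounded complementary component of K₁, then K₁ ∩ K₂ ≠ ∅. -/
open Set

/-- The Newhouse thickness of the basic interval `I_σ` in a binary decomposition. -/
noncomputable def localThickness {K : Set ℝ} (D : CantorDecomp K) (σ : List Bool) : ℝ :=
  min ((D.c σ - D.a σ) / (D.d σ - D.c σ)) ((D.b σ - D.d σ) / (D.d σ - D.c σ))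

/-- The Newhouse thickness of a Cantor set with binary decomposition `D`. -/
noncomputable def thickness {K : Set ℝ} (D : CantorDecomp K) : ℝ :=
  ⨅ σ : List Bool, localThickness D σ

namespace NewhouseAux

variable {K K' : Set ℝ}

lemma a_lt_b (D : CantorDecomp K) (σ : List Bool) : D.a σ < D.b σ :=
  lt_of_le_of_lt (D.le_c σ) (lt_of_lt_of_le (D.c_lt_d σ) (D.d_le σ))

lemma hull_subset (D : CantorDecomp K) : K ⊆ Set.Icc (D.a []) (D.b []) := by
  rw [D.hull]; exact subset_convexHull ℝ K

lemma nil_mem (hK : IsCantorSet K) (D : CantorDecomp K) : D.a [] ∈ K ∧ D.b [] ∈ K := by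
  obtain ⟨hne, hcomp, -, -⟩ := hK
  have hsub := hull_subset D
  have h1 : sInf K ∈ K := hcomp.sInf_mem hne
  have h2 : sSup K ∈ K := hcomp.sSup_mem hne
  have hconv : convexHull ℝ K ⊆ Set.Icc (sInf K) (sSup K) :=
    convexHull_min (fun x hx => ⟨csInf_le hcomp.bddBelow hx, le_csSup hcomp.bddAbove hx⟩)
      (convex_Icc _ _)
  have haIcc : D.a [] ∈ convexHull ℝ K := by
    rw [← D.hull]; exact ⟨le_refl _, (a_lt_b D []).le⟩
  have hbIcc : D.b [] ∈ convexHull ℝ K := by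
    rw [← D.hull]; exact ⟨(a_lt_b D []).le, le_refl _⟩
  have ha := hconv haIcc
  have hb := hconv hbIcc
  constructor
  · have : D.a [] = sInf K := le_antisymm (hsub h1).1 ha.1
    rw [this]; exact h1
  · have : D.b [] = sSup K := le_antisymm hb.2 (hsub h2).2
    rw [this]; exact h2

lemma free_around {K : Set ℝ} (hcl : IsClosed K) {z : ℝ} (hz : z ∉ K) :
    ∃ δ > 0, ∀ y ∈ Set.Ioo (z - δ) (z + δ), y ∉ K := by
  obtain ⟨δ, hδ, hball⟩ := Metric.isOpen_iff.mp hcl.isOpen_compl z hz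
  exact ⟨δ, hδ, fun y hy => hball (by rw [Real.ball_eq_Ioo]; exact hy)⟩

lemma c_mem (hcl : IsClosed K) (D : CantorDecomp K) (σ : List Bool) (ha : D.a σ ∈ K) :
    D.c σ ∈ K := by
  by_contra hc
  obtain ⟨δ, hδ, hfree⟩ := free_around hcl hc
  have hfree2 : Set.Ioo (max (D.a σ) (D.c σ - δ)) (D.d σ) ∩ K = ∅ := by
    apply Set.eq_empty_iff_forall_notMem.mpr
    rintro z ⟨⟨hz1, hz2⟩, hzK⟩
    rcases lt_trichotomy z (D.c σ) with h | h | h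
    · exact hfree z ⟨lt_of_le_of_lt (le_max_right _ _) hz1, by linarith⟩ hzK
    · exact hc (h ▸ hzK)
    · have hgap := D.gap_disjoint σ
      rw [Set.eq_empty_iff_forall_notMem] at hgap
      exact hgap z ⟨⟨h, hz2⟩, hzK⟩
  have hlg := D.largest_gap σ _ _ (le_max_left _ _) (D.d_le σ) hfree2
  rcases max_cases (D.a σ) (D.c σ - δ) with ⟨heq, hge⟩ | ⟨heq, hlt⟩
  · rw [heq] at hlg
    have : D.a σ = D.c σ := le_antisymm (D.le_c σ) (by linarith)
    exact hc (this ▸ ha)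
  · rw [heq] at hlg; linarith

lemma d_mem (hcl : IsClosed K) (D : CantorDecomp K) (σ : List Bool) (hb : D.b σ ∈ K) :
    D.d σ ∈ K := by
  by_contra hd
  obtain ⟨δ, hδ, hfree⟩ := free_around hcl hd
  have hfree2 : Set.Ioo (D.c σ) (min (D.b σ) (D.d σ + δ)) ∩ K = ∅ := by
    apply Set.eq_empty_iff_forall_notMem.mpr
    rintro z ⟨⟨hz1, hz2⟩, hzK⟩
    rcases lt_trichotomy z (D.d σ) with h | h | h
    · have hgap := D.gap_disjoint σ
      rw [Set.eq_empty_iff_forall_notMem] at hgap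
      exact hgap z ⟨⟨hz1, h⟩, hzK⟩
    · exact hd (h ▸ hzK)
    · exact hfree z ⟨by linarith, lt_of_lt_of_le hz2 (min_le_right _ _)⟩ hzK
  have hlg := D.largest_gap σ _ _ (D.le_c σ) (min_le_left _ _) hfree2
  rcases min_cases (D.b σ) (D.d σ + δ) with ⟨heq, hge⟩ | ⟨heq, hlt⟩
  · rw [heq] at hlg
    have : D.b σ = D.d σ := le_antisymm (by linarith) (D.d_le σ)
    exact hd (this ▸ hb)
  · rw [heq] at hlg; linarith

lemma mem_all (hK : IsCantorSet K) (D : CantorDecomp K) (σ : List Bool) :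
    D.a σ ∈ K ∧ D.b σ ∈ K ∧ D.c σ ∈ K ∧ D.d σ ∈ K := by
  have hcl : IsClosed K := hK.2.1.isClosed
  have hab : D.a σ ∈ K ∧ D.b σ ∈ K := by
    induction σ using List.reverseRecOn with
    | nil => exact nil_mem hK D
    | append_singleton σ x ih =>
      have hc := c_mem hcl D σ ih.1
      have hd := d_mem hcl D σ ih.2
      cases x
      · rw [D.left_a, D.left_b]; exact ⟨ih.1, hc⟩
      · rw [D.right_a, D.right_b]; exact ⟨hd, ih.2⟩
  exact ⟨hab.1, hab.2, c_mem hcl D σ hab.1, d_mem hcl D σ hab.2⟩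

lemma child_a_le (D : CantorDecomp K) (σ : List Bool) (x : Bool) :
    D.a σ ≤ D.a (σ ++ [x]) := by
  cases x
  · rw [D.left_a]
  · rw [D.right_a]
    have h1 := D.le_c σ; have h2 := D.c_lt_d σ; linarith

lemma child_b_le (D : CantorDecomp K) (σ : List Bool) (x : Bool) :
    D.b (σ ++ [x]) ≤ D.b σ := by
  cases x
  · rw [D.left_b]
    have h2 := D.c_lt_d σ; have h3 := D.d_le σ; linarith
  · rw [D.right_b]

lemma child_len (D : CantorDecomp K) (σ : List Bool) (x : Bool) :
    D.b (σ ++ [x]) - D.a (σ ++ [x]) ≤ (D.b σ - D.a σ) - (D.d σ - D.c σ) := by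
  have h1 := D.le_c σ; have h2 := D.c_lt_d σ; have h3 := D.d_le σ
  cases x
  · rw [D.left_a, D.left_b]; linarith
  · rw [D.right_a, D.right_b]; linarith

lemma loc_nonneg (D : CantorDecomp K) (σ : List Bool) : 0 ≤ localThickness D σ := by
  have h1 := D.le_c σ; have h2 := D.c_lt_d σ; have h3 := D.d_le σ
  apply le_min <;> apply div_nonneg <;> linarith

lemma thickness_le_loc (D : CantorDecomp K) (σ : List Bool) :
    thickness D ≤ localThickness D σ :=
  ciInf_le ⟨0, by rintro x ⟨τ, rfl⟩; exact loc_nonneg D τ⟩ σ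

lemma thickness_nonneg (D : CantorDecomp K) : 0 ≤ thickness D :=
  le_ciInf (loc_nonneg D)

lemma bridge_left (D : CantorDecomp K) (σ : List Bool) :
    thickness D * (D.d σ - D.c σ) ≤ D.c σ - D.a σ := by
  have hg : 0 < D.d σ - D.c σ := sub_pos.mpr (D.c_lt_d σ)
  have h := (thickness_le_loc D σ).trans (min_le_left _ _)
  exact (le_div_iff₀ hg).mp h

lemma bridge_right (D : CantorDecomp K) (σ : List Bool) :
    thickness D * (D.d σ - D.c σ) ≤ D.b σ - D.d σ := by
  have hg : 0 < D.d σ - D.c σ := sub_pos.mpr (D.c_lt_d σ)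
  have h := (thickness_le_loc D σ).trans (min_le_right _ _)
  exact (le_div_iff₀ hg).mp h

def Lk (D : CantorDecomp K) (D' : CantorDecomp K') (σ ρ : List Bool) : Prop :=
  D.a σ < D'.a ρ ∧ D'.a ρ < D.b σ ∧ D.b σ < D'.b ρ

def Nst (D : CantorDecomp K) (D' : CantorDecomp K') (σ : List Bool) : Prop :=
  D.a σ < D'.a [] ∧ D'.b [] < D.b σ

lemma stepL (hK : IsCantorSet K) (hK' : IsCantorSet K')
    (D : CantorDecomp K) (D' : CantorDecomp K')
    (hdis : ∀ z, z ∈ K → z ∈ K' → False)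
    (hττ' : 1 ≤ thickness D * thickness D')
    (σ ρ : List Bool) (h : Lk D D' σ ρ) :
    (∃ x, Lk D D' (σ ++ [x]) ρ) ∨ (∃ y, Lk D D' σ (ρ ++ [y])) ∨
      Lk D' D (ρ ++ [false]) (σ ++ [true]) := by
  obtain ⟨h1, h2, h3⟩ := h
  have hlc := D.le_c σ; have hcd := D.c_lt_d σ; have hdb := D.d_le σ
  have hlc' := D'.le_c ρ; have hcd' := D'.c_lt_d ρ; have hdb' := D'.d_le ρ
  by_cases k1 : D'.a ρ < D.c σ
  · refine Or.inl ⟨false, ?_⟩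
    unfold Lk; rw [D.left_a, D.left_b]
    exact ⟨h1, k1, by linarith⟩
  by_cases k2 : D.d σ < D'.a ρ
  · refine Or.inl ⟨true, ?_⟩
    unfold Lk; rw [D.right_a, D.right_b]
    exact ⟨k2, h2, h3⟩
  by_cases k3 : D.b σ < D'.c ρ
  · refine Or.inr (Or.inl ⟨false, ?_⟩)
    unfold Lk; rw [D'.left_a, D'.left_b]
    exact ⟨h1, h2, k3⟩
  by_cases k4 : D'.d ρ < D.b σ
  · refine Or.inr (Or.inl ⟨true, ?_⟩)
    unfold Lk; rw [D'.right_a, D'.right_b]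
    exact ⟨by linarith, k4, h3⟩
  push_neg at k1 k2 k3 k4
  obtain ⟨haK, hbK, hcK, hdK⟩ := mem_all hK D σ
  obtain ⟨haK', hbK', hcK', hdK'⟩ := mem_all hK' D' ρ
  by_cases k5 : D.d σ < D'.c ρ
  · refine Or.inr (Or.inr ?_)
    unfold Lk; rw [D'.left_a, D'.left_b, D.right_a, D.right_b]
    refine ⟨lt_of_le_of_ne k2 (fun e => hdis _ hdK (by rw [← e]; exact haK')), k5,
      lt_of_le_of_ne k3 (fun e => hdis _ hbK (by rw [← e]; exact hcK'))⟩
  push_neg at k5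
  exfalso
  have hg : (0:ℝ) < D.d σ - D.c σ := by linarith
  have hg' : (0:ℝ) < D'.d ρ - D'.c ρ := by linarith
  have br := bridge_right D σ
  have br' := bridge_left D' ρ
  have hbd' : D.b σ < D'.d ρ :=
    lt_of_le_of_ne k4 (fun e => hdis _ hbK (by rw [e]; exact hdK'))
  have hτ := thickness_nonneg D
  have hτ' := thickness_nonneg D'
  have e1 : thickness D * (D.d σ - D.c σ) < D'.d ρ - D'.c ρ := by linarith
  have e2 : thickness D' * (D'.d ρ - D'.c ρ) ≤ D.d σ - D.c σ := by linarith
  have e3 : (thickness D * (D.d σ - D.c σ)) * (thickness D' * (D'.d ρ - D'.c ρ)) ≤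
      (thickness D * (D.d σ - D.c σ)) * (D.d σ - D.c σ) :=
    mul_le_mul_of_nonneg_left e2 (mul_nonneg hτ hg.le)
  have e4 : (thickness D * (D.d σ - D.c σ)) * (D.d σ - D.c σ) <
      (D'.d ρ - D'.c ρ) * (D.d σ - D.c σ) := mul_lt_mul_of_pos_right e1 hg
  have e5 : (D.d σ - D.c σ) * (D'.d ρ - D'.c ρ) ≤
      (thickness D * thickness D') * ((D.d σ - D.c σ) * (D'.d ρ - D'.c ρ)) :=
    le_mul_of_one_le_left (mul_pos hg hg').le hττ'
  have e6 : (thickness D * (D.d σ - D.c σ)) * (thickness D' * (D'.d ρ - D'.c ρ)) =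
      (thickness D * thickness D') * ((D.d σ - D.c σ) * (D'.d ρ - D'.c ρ)) := by ring
  have e7 : (D'.d ρ - D'.c ρ) * (D.d σ - D.c σ) =
      (D.d σ - D.c σ) * (D'.d ρ - D'.c ρ) := by ring
  linarith

lemma stepN (hK : IsCantorSet K) (hK' : IsCantorSet K')
    (D : CantorDecomp K) (D' : CantorDecomp K')
    (hdis : ∀ z, z ∈ K → z ∈ K' → False)
    (hhit : ∀ x y : ℝ, K' ⊆ Set.Ioo x y → (Set.Ioo x y ∩ K).Nonempty)
    (σ : List Bool) (h : Nst D D' σ) :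
    (∃ x, Nst D D' (σ ++ [x])) ∨ Lk D D' (σ ++ [false]) [] ∨ Lk D' D [] (σ ++ [true]) := by
  obtain ⟨h1, h2⟩ := h
  have hlc := D.le_c σ; have hcd := D.c_lt_d σ; have hdb := D.d_le σ
  have hab' := a_lt_b D' ([] : List Bool)
  obtain ⟨haK, hbK, hcK, hdK⟩ := mem_all hK D σ
  obtain ⟨haK', hbK', -, -⟩ := mem_all hK' D' []
  by_cases k1 : D'.b [] < D.c σ
  · refine Or.inl ⟨false, ?_⟩
    unfold Nst; rw [D.left_a, D.left_b]
    exact ⟨h1, k1⟩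
  by_cases k2 : D.d σ < D'.a []
  · refine Or.inl ⟨true, ?_⟩
    unfold Nst; rw [D.right_a, D.right_b]
    exact ⟨k2, h2⟩
  push_neg at k1 k2
  by_cases k3 : D.c σ < D'.a []
  · by_cases k4 : D'.b [] < D.d σ
    · exfalso
      have hsub' := hull_subset D'
      obtain ⟨z, hz, hzK⟩ := hhit (D.c σ) (D.d σ)
        (fun x hx => ⟨lt_of_lt_of_le k3 (hsub' hx).1, lt_of_le_of_lt (hsub' hx).2 k4⟩)
      have hgap := D.gap_disjoint σ
      rw [Set.eq_empty_iff_forall_notMem] at hgap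
      exact hgap z ⟨hz, hzK⟩
    · push_neg at k4
      refine Or.inr (Or.inr ?_)
      unfold Lk; rw [D.right_a, D.right_b]
      exact ⟨lt_of_le_of_ne k2 (fun e => hdis _ hdK (by rw [← e]; exact haK')),
        lt_of_le_of_ne k4 (fun e => hdis _ hdK (by rw [e]; exact hbK')), h2⟩
  · push_neg at k3
    refine Or.inr (Or.inl ?_)
    unfold Lk; rw [D.left_a, D.left_b]
    exact ⟨h1, lt_of_le_of_ne k3 (fun e => hdis _ hcK (by rw [← e]; exact haK')),
      lt_of_le_of_ne k1 (fun e => hdis _ hcK (by rw [e]; exact hbK'))⟩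

variable {K₁ K₂ : Set ℝ}

def GoodPair (D₁ : CantorDecomp K₁) (D₂ : CantorDecomp K₂) (s : List Bool × List Bool) : Prop :=
  Lk D₁ D₂ s.1 s.2 ∨ Lk D₂ D₁ s.2 s.1 ∨ (s.2 = [] ∧ Nst D₁ D₂ s.1) ∨
    (s.1 = [] ∧ Nst D₂ D₁ s.2)

def LinkedPair (D₁ : CantorDecomp K₁) (D₂ : CantorDecomp K₂) (s : List Bool × List Bool) : Prop :=
  Lk D₁ D₂ s.1 s.2 ∨ Lk D₂ D₁ s.2 s.1

lemma initial_good (hK₁ : IsCantorSet K₁) (hK₂ : IsCantorSet K₂)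
    (D₁ : CantorDecomp K₁) (D₂ : CantorDecomp K₂)
    (hdis : ∀ z, z ∈ K₁ → z ∈ K₂ → False)
    (h₁ : ∀ x y : ℝ, K₁ ⊆ Set.Ioo x y → (Set.Ioo x y ∩ K₂).Nonempty) :
    GoodPair D₁ D₂ ([], []) := by
  obtain ⟨ha1, hb1, -, -⟩ := mem_all hK₁ D₁ []
  obtain ⟨ha2, hb2, -, -⟩ := mem_all hK₂ D₂ []
  have hab1 := a_lt_b D₁ ([] : List Bool)
  have hab2 := a_lt_b D₂ ([] : List Bool)
  have hsub1 := hull_subset D₁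
  have hsub2 := hull_subset D₂
  have hne1 : D₁.a [] ≠ D₂.a [] := fun e => hdis _ ha1 (by rw [e]; exact ha2)
  have hne2 : D₁.b [] ≠ D₂.b [] := fun e => hdis _ hb1 (by rw [e]; exact hb2)
  have hne3 : D₁.b [] ≠ D₂.a [] := fun e => hdis _ hb1 (by rw [e]; exact ha2)
  have hne4 : D₁.a [] ≠ D₂.b [] := fun e => hdis _ ha1 (by rw [e]; exact hb2)
  have hns1 : ¬ (D₁.b [] < D₂.a []) := by
    intro hlt
    obtain ⟨z, hz, hzK⟩ := h₁ (D₁.a [] - 1) ((D₁.b [] + D₂.a []) / 2)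
      (fun x hx => ⟨by linarith [(hsub1 hx).1], by linarith [(hsub1 hx).2]⟩)
    have := (hsub2 hzK).1
    linarith [hz.2]
  have hns2 : ¬ (D₂.b [] < D₁.a []) := by
    intro hlt
    obtain ⟨z, hz, hzK⟩ := h₁ ((D₂.b [] + D₁.a []) / 2) (D₁.b [] + 1)
      (fun x hx => ⟨by linarith [(hsub1 hx).1], by linarith [(hsub1 hx).2]⟩)
    have := (hsub2 hzK).2
    linarith [hz.1]
  rcases lt_or_gt_of_ne hne1 with hA | hA
  · rcases lt_or_gt_of_ne hne2 with hB | hB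
    · refine Or.inl ?_
      unfold Lk
      exact ⟨hA, lt_of_le_of_ne (not_lt.mp hns1) (Ne.symm hne3), hB⟩
    · exact Or.inr (Or.inr (Or.inl ⟨rfl, hA, hB⟩))
  · rcases lt_or_gt_of_ne hne2 with hB | hB
    · exact Or.inr (Or.inr (Or.inr ⟨rfl, hA, hB⟩))
    · refine Or.inr (Or.inl ?_)
      unfold Lk
      exact ⟨hA, lt_of_le_of_ne (not_lt.mp hns2) hne4, hB⟩

lemma step_ex (hK₁ : IsCantorSet K₁) (hK₂ : IsCantorSet K₂)
    (D₁ : CantorDecomp K₁) (D₂ : CantorDecomp K₂)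
    (hdis : ∀ z, z ∈ K₁ → z ∈ K₂ → False)
    (hττ : 1 ≤ thickness D₁ * thickness D₂)
    (h₁ : ∀ x y : ℝ, K₁ ⊆ Set.Ioo x y → (Set.Ioo x y ∩ K₂).Nonempty)
    (h₂ : ∀ x y : ℝ, K₂ ⊆ Set.Ioo x y → (Set.Ioo x y ∩ K₁).Nonempty)
    (s : List Bool × List Bool) (hs : GoodPair D₁ D₂ s) :
    ∃ s', GoodPair D₁ D₂ s' ∧
      (s'.1 = s.1 ∨ ∃ x, s'.1 = s.1 ++ [x]) ∧
      (s'.2 = s.2 ∨ ∃ y, s'.2 = s.2 ++ [y]) ∧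
      s.1.length + s.2.length < s'.1.length + s'.2.length ∧
      (LinkedPair D₁ D₂ s → LinkedPair D₁ D₂ s') := by
  obtain ⟨σ, ρ⟩ := s
  have hdis' : ∀ z, z ∈ K₂ → z ∈ K₁ → False := fun z h2 h1 => hdis z h1 h2
  have hττ' : 1 ≤ thickness D₂ * thickness D₁ := by rw [mul_comm]; exact hττ
  rcases hs with hL | hL | ⟨hρ, hN⟩ | ⟨hσ, hN⟩
  · rcases stepL hK₁ hK₂ D₁ D₂ hdis hττ σ ρ hL with ⟨x, hx⟩ | ⟨y, hy⟩ | hB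
    · exact ⟨(σ ++ [x], ρ), (by left; exact hx), Or.inr ⟨x, rfl⟩, Or.inl rfl,
        by simp only [List.length_append, List.length_cons, List.length_nil]; omega,
        fun _ => by left; exact hx⟩
    · exact ⟨(σ, ρ ++ [y]), (by left; exact hy), Or.inl rfl, Or.inr ⟨y, rfl⟩,
        by simp only [List.length_append, List.length_cons, List.length_nil]; omega,
        fun _ => by left; exact hy⟩
    · exact ⟨(σ ++ [true], ρ ++ [false]), (by right; left; exact hB), Or.inr ⟨true, rfl⟩,
        Or.inr ⟨false, rfl⟩,
        by simp only [List.length_append, List.length_cons, List.length_nil]; omega,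
        fun _ => by right; exact hB⟩
  · rcases stepL hK₂ hK₁ D₂ D₁ hdis' hττ' ρ σ hL with ⟨x, hx⟩ | ⟨y, hy⟩ | hB
    · exact ⟨(σ, ρ ++ [x]), (by right; left; exact hx), Or.inl rfl, Or.inr ⟨x, rfl⟩,
        by simp only [List.length_append, List.length_cons, List.length_nil]; omega,
        fun _ => by right; exact hx⟩
    · exact ⟨(σ ++ [y], ρ), (by right; left; exact hy), Or.inr ⟨y, rfl⟩, Or.inl rfl,
        by simp only [List.length_append, List.length_cons, List.length_nil]; omega,
        fun _ => by right; exact hy⟩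
    · exact ⟨(σ ++ [false], ρ ++ [true]), (by left; exact hB), Or.inr ⟨false, rfl⟩,
        Or.inr ⟨true, rfl⟩,
        by simp only [List.length_append, List.length_cons, List.length_nil]; omega,
        fun _ => by left; exact hB⟩
  · subst hρ
    have hLfalse : ¬ LinkedPair D₁ D₂ (σ, ([] : List Bool)) := by
      rintro (⟨u1, u2, u3⟩ | ⟨u1, u2, u3⟩)
      · exact absurd hN.2 (by simp only [not_lt]; exact u3.le)
      · exact absurd hN.1 (by simp only [not_lt]; exact u1.le)
    rcases stepN hK₁ hK₂ D₁ D₂ hdis h₂ σ hN with ⟨x, hx⟩ | hx | hx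
    · exact ⟨(σ ++ [x], []), (by right; right; left; exact ⟨rfl, hx⟩), Or.inr ⟨x, rfl⟩,
        Or.inl rfl,
        by simp only [List.length_append, List.length_cons, List.length_nil]; omega,
        fun hc => absurd hc hLfalse⟩
    · exact ⟨(σ ++ [false], []), (by left; exact hx), Or.inr ⟨false, rfl⟩, Or.inl rfl,
        by simp only [List.length_append, List.length_cons, List.length_nil]; omega,
        fun hc => absurd hc hLfalse⟩
    · exact ⟨(σ ++ [true], []), (by right; left; exact hx), Or.inr ⟨true, rfl⟩, Or.inl rfl,
        by simp only [List.length_append, List.length_cons, List.length_nil]; omega,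
        fun hc => absurd hc hLfalse⟩
  · subst hσ
    have hLfalse : ¬ LinkedPair D₁ D₂ (([] : List Bool), ρ) := by
      rintro (⟨u1, u2, u3⟩ | ⟨u1, u2, u3⟩)
      · exact absurd hN.1 (by simp only [not_lt]; exact u1.le)
      · exact absurd hN.2 (by simp only [not_lt]; exact u3.le)
    rcases stepN hK₂ hK₁ D₂ D₁ hdis' h₁ ρ hN with ⟨x, hx⟩ | hx | hx
    · exact ⟨(([] : List Bool), ρ ++ [x]), (by right; right; right; exact ⟨rfl, hx⟩),
        Or.inl rfl, Or.inr ⟨x, rfl⟩,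
        by simp only [List.length_append, List.length_cons, List.length_nil]; omega,
        fun hc => absurd hc hLfalse⟩
    · exact ⟨(([] : List Bool), ρ ++ [false]), (by right; left; exact hx), Or.inl rfl,
        Or.inr ⟨false, rfl⟩,
        by simp only [List.length_append, List.length_cons, List.length_nil]; omega,
        fun hc => absurd hc hLfalse⟩
    · exact ⟨(([] : List Bool), ρ ++ [true]), (by left; exact hx), Or.inl rfl,
        Or.inr ⟨true, rfl⟩,
        by simp only [List.length_append, List.length_cons, List.length_nil]; omega,
        fun hc => absurd hc hLfalse⟩


end NewhouseAux

theorem stmt_17 (K₁ K₂ : Set ℝ) (hK₁ : IsCantorSet K₁) (hK₂ : IsCantorSet K₂)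
    (D₁ : CantorDecomp K₁) (D₂ : CantorDecomp K₂)
    (hthick : 1 ≤ thickness D₁ * thickness D₂)
    (h₁ : ∀ x y : ℝ, K₁ ⊆ Set.Ioo x y → (Set.Ioo x y ∩ K₂).Nonempty)
    (h₂ : ∀ x y : ℝ, K₂ ⊆ Set.Ioo x y → (Set.Ioo x y ∩ K₁).Nonempty) :
    (K₁ ∩ K₂).Nonempty := by
  classical
  by_contra hne
  have hdis : ∀ z, z ∈ K₁ → z ∈ K₂ → False := fun z hz1 hz2 => hne ⟨z, hz1, hz2⟩
  have h0 : NewhouseAux.GoodPair D₁ D₂ ([], []) :=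
    NewhouseAux.initial_good hK₁ hK₂ D₁ D₂ hdis h₁
  have hstep := NewhouseAux.step_ex hK₁ hK₂ D₁ D₂ hdis hthick h₁ h₂
  obtain ⟨f, hf0, hr1, hr2, hrlen, hrL, hGn⟩ :
      ∃ f : ℕ → List Bool × List Bool,
        f 0 = ([], []) ∧
        (∀ n, (f (n+1)).1 = (f n).1 ∨ ∃ x, (f (n+1)).1 = (f n).1 ++ [x]) ∧
        (∀ n, (f (n+1)).2 = (f n).2 ∨ ∃ y, (f (n+1)).2 = (f n).2 ++ [y]) ∧
        (∀ n, (f n).1.length + (f n).2.length < (f (n+1)).1.length + (f (n+1)).2.length) ∧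
        (∀ n, NewhouseAux.LinkedPair D₁ D₂ (f n) → NewhouseAux.LinkedPair D₁ D₂ (f (n+1))) ∧
        (∀ n, NewhouseAux.GoodPair D₁ D₂ (f n)) := by
    choose F hG hE1 hE2 hlen hLL using hstep
    let seq : ℕ → {s : List Bool × List Bool // NewhouseAux.GoodPair D₁ D₂ s} :=
      fun n => Nat.rec ⟨([], []), h0⟩ (fun _ p => ⟨F p.1 p.2, hG p.1 p.2⟩) n
    exact ⟨fun n => (seq n).1, rfl, fun n => hE1 _ _, fun n => hE2 _ _,
      fun n => hlen _ _, fun n => hLL _ _, fun n => (seq n).2⟩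
  have hcount : ∀ n, n ≤ (f n).1.length + (f n).2.length := by
    intro n; induction n with
    | zero => exact Nat.zero_le _
    | succ n ih => have := hrlen n; omega
  have ha1mono : Monotone fun n => D₁.a (f n).1 := by
    apply monotone_nat_of_le_succ
    intro n
    rcases hr1 n with h | ⟨x, h⟩
    · rw [h]
    · rw [h]; exact NewhouseAux.child_a_le D₁ _ x
  have hb1anti : Antitone fun n => D₁.b (f n).1 := by
    apply antitone_nat_of_succ_le
    intro n
    rcases hr1 n with h | ⟨x, h⟩
    · rw [h]
    · rw [h]; exact NewhouseAux.child_b_le D₁ _ x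
  have ha2mono : Monotone fun n => D₂.a (f n).2 := by
    apply monotone_nat_of_le_succ
    intro n
    rcases hr2 n with h | ⟨y, h⟩
    · rw [h]
    · rw [h]; exact NewhouseAux.child_a_le D₂ _ y
  have hb2anti : Antitone fun n => D₂.b (f n).2 := by
    apply antitone_nat_of_succ_le
    intro n
    rcases hr2 n with h | ⟨y, h⟩
    · rw [h]
    · rw [h]; exact NewhouseAux.child_b_le D₂ _ y
  set p : ℕ → ℝ := fun n => max (D₁.a (f n).1) (D₂.a (f n).2) with hpdef
  set q : ℕ → ℝ := fun n => min (D₁.b (f n).1) (D₂.b (f n).2) with hqdef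
  have hpmono : Monotone p := fun n m hnm => max_le_max (ha1mono hnm) (ha2mono hnm)
  have hqanti : Antitone q := fun n m hnm => min_le_min (hb1anti hnm) (hb2anti hnm)
  have hpq : ∀ n, p n < q n := by
    intro n
    have g1 := NewhouseAux.a_lt_b D₁ (f n).1
    have g2 := NewhouseAux.a_lt_b D₂ (f n).2
    simp only [hpdef, hqdef]
    rcases hGn n with ⟨u1, u2, u3⟩ | ⟨u1, u2, u3⟩ | ⟨he, u1, u2⟩ | ⟨he, u1, u2⟩
    · exact max_lt (lt_min g1 (by linarith)) (lt_min u2 g2)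
    · exact max_lt (lt_min g1 u2) (lt_min (by linarith) g2)
    · rw [he]
      have g0 := NewhouseAux.a_lt_b D₂ ([] : List Bool)
      exact max_lt (lt_min g1 (by linarith)) (lt_min (by linarith) g0)
    · rw [he]
      have g0 := NewhouseAux.a_lt_b D₁ ([] : List Bool)
      exact max_lt (lt_min g0 (by linarith)) (lt_min (by linarith) g2)
  have hbddp : BddAbove (Set.range p) := by
    refine ⟨q 0, ?_⟩; rintro x ⟨n, rfl⟩
    exact le_trans (hpq n).le (hqanti (Nat.zero_le n))
  have hbddq : BddBelow (Set.range q) := by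
    refine ⟨p 0, ?_⟩; rintro x ⟨n, rfl⟩
    exact le_trans (hpmono (Nat.zero_le n)) (hpq n).le
  set P := ⨆ n, p n with hPdef
  set Q := ⨅ n, q n with hQdef
  have hPn : ∀ n, p n ≤ P := fun n => le_ciSup hbddp n
  have hQn : ∀ n, Q ≤ q n := fun n => ciInf_le hbddq n
  have hPQ : P ≤ Q := by
    apply ciSup_le; intro n; apply le_ciInf; intro m
    rcases le_total n m with h | h
    · exact le_trans (hpmono h) (hpq m).le
    · exact le_trans (hpq n).le (hqanti h)
  rcases eq_or_lt_of_le hPQ with hEQ | hPltQ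
  · -- P = Q
    by_cases hLex : ∃ m, NewhouseAux.LinkedPair D₁ D₂ (f m)
    · obtain ⟨m, hm⟩ := hLex
      have hLall : ∀ k, NewhouseAux.LinkedPair D₁ D₂ (f (m+k)) := by
        intro k; induction k with
        | zero => exact hm
        | succ k ih => exact hrL (m+k) ih
      have hmem : ∀ k, (p (m+k) ∈ K₂ ∧ q (m+k) ∈ K₁) ∨ (p (m+k) ∈ K₁ ∧ q (m+k) ∈ K₂) := by
        intro k
        rcases hLall k with ⟨u1, u2, u3⟩ | ⟨u1, u2, u3⟩
        · left; constructor
          · simp only [hpdef]; rw [max_eq_right u1.le]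
            exact (NewhouseAux.mem_all hK₂ D₂ _).1
          · simp only [hqdef]; rw [min_eq_left u3.le]
            exact (NewhouseAux.mem_all hK₁ D₁ _).2.1
        · right; constructor
          · simp only [hpdef]; rw [max_eq_left u1.le]
            exact (NewhouseAux.mem_all hK₁ D₁ _).1
          · simp only [hqdef]; rw [min_eq_right u3.le]
            exact (NewhouseAux.mem_all hK₂ D₂ _).2.1
      have hpt : Filter.Tendsto p Filter.atTop (nhds P) := tendsto_atTop_ciSup hpmono hbddp
      have hqt : Filter.Tendsto q Filter.atTop (nhds P) := by
        rw [hEQ]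
        exact tendsto_atTop_ciInf hqanti hbddq
      have hshift : Filter.Tendsto (fun k => m + k) Filter.atTop Filter.atTop :=
        Filter.tendsto_atTop_mono (fun k => Nat.le_add_left k m) Filter.tendsto_id
      have hpt2 : Filter.Tendsto (fun k => p (m+k)) Filter.atTop (nhds P) := hpt.comp hshift
      have hqt2 : Filter.Tendsto (fun k => q (m+k)) Filter.atTop (nhds P) := hqt.comp hshift
      set xk : ℕ → ℝ := fun k => if p (m+k) ∈ K₁ then p (m+k) else q (m+k) with hxdef
      set yk : ℕ → ℝ := fun k => if p (m+k) ∈ K₁ then q (m+k) else p (m+k) with hydef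
      have hx1 : ∀ k, xk k ∈ K₁ := by
        intro k
        by_cases hc : p (m+k) ∈ K₁
        · simp only [hxdef, if_pos hc]; exact hc
        · simp only [hxdef, if_neg hc]
          rcases hmem k with ⟨hp2, hq1⟩ | ⟨hp1, -⟩
          · exact hq1
          · exact absurd hp1 hc
      have hy2 : ∀ k, yk k ∈ K₂ := by
        intro k
        by_cases hc : p (m+k) ∈ K₁
        · simp only [hydef, if_pos hc]
          rcases hmem k with ⟨hp2, -⟩ | ⟨-, hq2⟩
          · exact (hdis _ hc hp2).elim
          · exact hq2
        · simp only [hydef, if_neg hc]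
          rcases hmem k with ⟨hp2, -⟩ | ⟨hp1, -⟩
          · exact hp2
          · exact absurd hp1 hc
      have hxsq : ∀ k, p (m+k) ≤ xk k ∧ xk k ≤ q (m+k) := by
        intro k; by_cases hc : p (m+k) ∈ K₁
        · simp only [hxdef, if_pos hc]; exact ⟨le_rfl, (hpq _).le⟩
        · simp only [hxdef, if_neg hc]; exact ⟨(hpq _).le, le_rfl⟩
      have hysq : ∀ k, p (m+k) ≤ yk k ∧ yk k ≤ q (m+k) := by
        intro k; by_cases hc : p (m+k) ∈ K₁
        · simp only [hydef, if_pos hc]; exact ⟨(hpq _).le, le_rfl⟩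
        · simp only [hydef, if_neg hc]; exact ⟨le_rfl, (hpq _).le⟩
      have hxt : Filter.Tendsto xk Filter.atTop (nhds P) :=
        tendsto_of_tendsto_of_tendsto_of_le_of_le hpt2 hqt2
          (fun k => (hxsq k).1) (fun k => (hxsq k).2)
      have hyt : Filter.Tendsto yk Filter.atTop (nhds P) :=
        tendsto_of_tendsto_of_tendsto_of_le_of_le hpt2 hqt2
          (fun k => (hysq k).1) (fun k => (hysq k).2)
      have hPK₁ : P ∈ K₁ :=
        hK₁.2.1.isClosed.mem_of_tendsto hxt (Filter.Eventually.of_forall hx1)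
      have hPK₂ : P ∈ K₂ :=
        hK₂.2.1.isClosed.mem_of_tendsto hyt (Filter.Eventually.of_forall hy2)
      exact hdis P hPK₁ hPK₂
    · push_neg at hLex
      have hN : ∀ n, ((f n).2 = [] ∧ NewhouseAux.Nst D₁ D₂ (f n).1) ∨
          ((f n).1 = [] ∧ NewhouseAux.Nst D₂ D₁ (f n).2) := by
        intro n
        rcases hGn n with hL | hL | h | h
        · exact absurd (show NewhouseAux.LinkedPair D₁ D₂ (f n) by left; exact hL) (hLex n)
        · exact absurd (show NewhouseAux.LinkedPair D₁ D₂ (f n) by right; exact hL) (hLex n)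
        · exact Or.inl h
        · exact Or.inr h
      rcases hN 1 with ⟨he, hN1⟩ | ⟨he, hN1⟩
      · have hallN1 : ∀ k, (f (1+k)).2 = [] ∧ NewhouseAux.Nst D₁ D₂ (f (1+k)).1 := by
          intro k; induction k with
          | zero => exact ⟨he, hN1⟩
          | succ k ih =>
            rcases hN ((1+k)+1) with h | ⟨hc, -⟩
            · exact h
            · exfalso
              have hnonnil : (f (1+k)).1 ≠ [] := by
                intro hxnil
                have hcn := hcount (1+k)
                rw [hxnil, ih.1] at hcn
                simp only [List.length_nil] at hcn
                omega
              rcases hr1 (1+k) with h' | ⟨x, h'⟩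
              · rw [hc] at h'; exact hnonnil h'.symm
              · rw [hc] at h'; simp at h'
        have hp_le : ∀ n, p n ≤ D₂.a [] := by
          have h1 : p 1 ≤ D₂.a [] := by
            obtain ⟨h2e, hv⟩ := hallN1 0
            have h2e' : (f 1).2 = [] := h2e
            have hv1 : D₁.a (f 1).1 < D₂.a [] := hv.1
            simp only [hpdef]
            exact max_le hv1.le (le_of_eq (by rw [h2e']))
          intro n
          rcases Nat.eq_zero_or_pos n with rfl | hpos
          · exact le_trans (hpmono (Nat.zero_le 1)) h1
          · obtain ⟨k, rfl⟩ : ∃ k, n = 1 + k := ⟨n - 1, by omega⟩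
            obtain ⟨h2e, hv⟩ := hallN1 k
            simp only [hpdef]
            exact max_le hv.1.le (le_of_eq (by rw [h2e]))
        have hq_ge : ∀ n, D₂.b [] ≤ q n := by
          have h1 : D₂.b [] ≤ q 1 := by
            obtain ⟨h2e, hv⟩ := hallN1 0
            have h2e' : (f 1).2 = [] := h2e
            have hv2 : D₂.b [] < D₁.b (f 1).1 := hv.2
            simp only [hqdef]
            exact le_min hv2.le (le_of_eq (by rw [h2e']))
          intro n
          rcases Nat.eq_zero_or_pos n with rfl | hpos
          · exact le_trans h1 (hqanti (Nat.zero_le 1))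
          · obtain ⟨k, rfl⟩ : ∃ k, n = 1 + k := ⟨n - 1, by omega⟩
            obtain ⟨h2e, hv⟩ := hallN1 k
            simp only [hqdef]
            exact le_min hv.2.le (le_of_eq (by rw [h2e]))
        have hP_le : P ≤ D₂.a [] := ciSup_le hp_le
        have hQ_ge : D₂.b [] ≤ Q := le_ciInf hq_ge
        have hab := NewhouseAux.a_lt_b D₂ ([] : List Bool)
        rw [hEQ] at hP_le
        linarith
      · have hallN2 : ∀ k, (f (1+k)).1 = [] ∧ NewhouseAux.Nst D₂ D₁ (f (1+k)).2 := by
          intro k; induction k with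
          | zero => exact ⟨he, hN1⟩
          | succ k ih =>
            rcases hN ((1+k)+1) with ⟨hc, -⟩ | h
            · exfalso
              have hnonnil : (f (1+k)).2 ≠ [] := by
                intro hxnil
                have hcn := hcount (1+k)
                rw [hxnil, ih.1] at hcn
                simp only [List.length_nil] at hcn
                omega
              rcases hr2 (1+k) with h' | ⟨x, h'⟩
              · rw [hc] at h'; exact hnonnil h'.symm
              · rw [hc] at h'; simp at h'
            · exact h
        have hp_le : ∀ n, p n ≤ D₁.a [] := by
          have h1 : p 1 ≤ D₁.a [] := by
            obtain ⟨h1e, hv⟩ := hallN2 0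
            have h1e' : (f 1).1 = [] := h1e
            have hv1 : D₂.a (f 1).2 < D₁.a [] := hv.1
            simp only [hpdef]
            exact max_le (le_of_eq (by rw [h1e'])) hv1.le
          intro n
          rcases Nat.eq_zero_or_pos n with rfl | hpos
          · exact le_trans (hpmono (Nat.zero_le 1)) h1
          · obtain ⟨k, rfl⟩ : ∃ k, n = 1 + k := ⟨n - 1, by omega⟩
            obtain ⟨h1e, hv⟩ := hallN2 k
            simp only [hpdef]
            exact max_le (le_of_eq (by rw [h1e])) hv.1.le
        have hq_ge : ∀ n, D₁.b [] ≤ q n := by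
          have h1 : D₁.b [] ≤ q 1 := by
            obtain ⟨h1e, hv⟩ := hallN2 0
            have h1e' : (f 1).1 = [] := h1e
            have hv2 : D₁.b [] < D₂.b (f 1).2 := hv.2
            simp only [hqdef]
            exact le_min (le_of_eq (by rw [h1e'])) hv2.le
          intro n
          rcases Nat.eq_zero_or_pos n with rfl | hpos
          · exact le_trans h1 (hqanti (Nat.zero_le 1))
          · obtain ⟨k, rfl⟩ : ∃ k, n = 1 + k := ⟨n - 1, by omega⟩
            obtain ⟨h1e, hv⟩ := hallN2 k
            simp only [hqdef]
            exact le_min (le_of_eq (by rw [h1e])) hv.2.le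
        have hP_le : P ≤ D₁.a [] := ciSup_le hp_le
        have hQ_ge : D₁.b [] ≤ Q := le_ciInf hq_ge
        have hab := NewhouseAux.a_lt_b D₁ ([] : List Bool)
        rw [hEQ] at hP_le
        linarith
  · -- P < Q
    have hzex : ∀ Ks : Set ℝ, IsTotallyDisconnected Ks →
        ∃ z, z ∈ Set.Ioo P Q ∧ z ∉ Ks := by
      intro Ks htd
      by_contra hcon
      push_neg at hcon
      have hsing := htd (Set.Ioo P Q) (fun z hz => hcon z hz) isPreconnected_Ioo
      have hm1 : (2*P+Q)/3 ∈ Set.Ioo P Q := ⟨by linarith, by linarith⟩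
      have hm2 : (P+2*Q)/3 ∈ Set.Ioo P Q := ⟨by linarith, by linarith⟩
      have := hsing hm1 hm2
      linarith
    obtain ⟨z₁, hz₁I, hz₁K⟩ := hzex K₁ hK₁.2.2.2
    obtain ⟨z₂, hz₂I, hz₂K⟩ := hzex K₂ hK₂.2.2.2
    obtain ⟨δ₁, hδ₁, hfr₁⟩ := NewhouseAux.free_around hK₁.2.1.isClosed hz₁K
    obtain ⟨δ₂, hδ₂, hfr₂⟩ := NewhouseAux.free_around hK₂.2.1.isClosed hz₂K
    set ε₁ := min (z₁+δ₁) Q - max (z₁-δ₁) P with hε₁def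
    set ε₂ := min (z₂+δ₂) Q - max (z₂-δ₂) P with hε₂def
    have hε₁ : 0 < ε₁ := by
      have t1 : max (z₁-δ₁) P < z₁ := max_lt (by linarith) hz₁I.1
      have t2 : z₁ < min (z₁+δ₁) Q := lt_min (by linarith) hz₁I.2
      rw [hε₁def]; linarith
    have hε₂ : 0 < ε₂ := by
      have t1 : max (z₂-δ₂) P < z₂ := max_lt (by linarith) hz₂I.1
      have t2 : z₂ < min (z₂+δ₂) Q := lt_min (by linarith) hz₂I.2
      rw [hε₂def]; linarith
    have hgap₁ : ∀ n, ε₁ ≤ D₁.d (f n).1 - D₁.c (f n).1 := by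
      intro n
      have hfr : Set.Ioo (max (z₁-δ₁) (D₁.a (f n).1)) (min (z₁+δ₁) (D₁.b (f n).1)) ∩ K₁ = ∅ := by
        apply Set.eq_empty_iff_forall_notMem.mpr
        rintro z ⟨⟨u1, u2⟩, hzK⟩
        exact hfr₁ z ⟨lt_of_le_of_lt (le_max_left _ _) u1,
          lt_of_lt_of_le u2 (min_le_left _ _)⟩ hzK
      have hlg := D₁.largest_gap (f n).1 _ _ (le_max_right _ _) (min_le_right _ _) hfr
      have hA : D₁.a (f n).1 ≤ P := le_trans (by simp only [hpdef]; exact le_max_left _ _) (hPn n)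
      have hB : Q ≤ D₁.b (f n).1 := le_trans (hQn n) (by simp only [hqdef]; exact min_le_left _ _)
      have t1 : max (z₁-δ₁) (D₁.a (f n).1) ≤ max (z₁-δ₁) P := max_le_max le_rfl hA
      have t2 : min (z₁+δ₁) Q ≤ min (z₁+δ₁) (D₁.b (f n).1) := min_le_min le_rfl hB
      rw [hε₁def]; linarith
    have hgap₂ : ∀ n, ε₂ ≤ D₂.d (f n).2 - D₂.c (f n).2 := by
      intro n
      have hfr : Set.Ioo (max (z₂-δ₂) (D₂.a (f n).2)) (min (z₂+δ₂) (D₂.b (f n).2)) ∩ K₂ = ∅ := by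
        apply Set.eq_empty_iff_forall_notMem.mpr
        rintro z ⟨⟨u1, u2⟩, hzK⟩
        exact hfr₂ z ⟨lt_of_le_of_lt (le_max_left _ _) u1,
          lt_of_lt_of_le u2 (min_le_left _ _)⟩ hzK
      have hlg := D₂.largest_gap (f n).2 _ _ (le_max_right _ _) (min_le_right _ _) hfr
      have hA : D₂.a (f n).2 ≤ P := le_trans (by simp only [hpdef]; exact le_max_right _ _) (hPn n)
      have hB : Q ≤ D₂.b (f n).2 := le_trans (hQn n) (by simp only [hqdef]; exact min_le_right _ _)
      have t1 : max (z₂-δ₂) (D₂.a (f n).2) ≤ max (z₂-δ₂) P := max_le_max le_rfl hA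
      have t2 : min (z₂+δ₂) Q ≤ min (z₂+δ₂) (D₂.b (f n).2) := min_le_min le_rfl hB
      rw [hε₂def]; linarith
    have hlen₁ : ∀ n, D₁.b (f n).1 - D₁.a (f n).1 + ((f n).1.length : ℝ) * ε₁ ≤
        D₁.b [] - D₁.a [] := by
      intro n; induction n with
      | zero => rw [hf0]; simp
      | succ n ih =>
        rcases hr1 n with h | ⟨x, h⟩
        · rw [h]; exact ih
        · rw [h]
          have hc := NewhouseAux.child_len D₁ (f n).1 x
          have hg := hgap₁ n
          simp only [List.length_append, List.length_cons, List.length_nil]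
          push_cast
          linarith
    have hlen₂ : ∀ n, D₂.b (f n).2 - D₂.a (f n).2 + ((f n).2.length : ℝ) * ε₂ ≤
        D₂.b [] - D₂.a [] := by
      intro n; induction n with
      | zero => rw [hf0]; simp
      | succ n ih =>
        rcases hr2 n with h | ⟨y, h⟩
        · rw [h]; exact ih
        · rw [h]
          have hc := NewhouseAux.child_len D₂ (f n).2 y
          have hg := hgap₂ n
          simp only [List.length_append, List.length_cons, List.length_nil]
          push_cast
          linarith
    have hb₁ : ∀ n, ((f n).1.length : ℝ) * ε₁ ≤ D₁.b [] - D₁.a [] := by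
      intro n
      have h := hlen₁ n
      have := (NewhouseAux.a_lt_b D₁ (f n).1).le
      linarith
    have hb₂ : ∀ n, ((f n).2.length : ℝ) * ε₂ ≤ D₂.b [] - D₂.a [] := by
      intro n
      have h := hlen₂ n
      have := (NewhouseAux.a_lt_b D₂ (f n).2).le
      linarith
    obtain ⟨N, hNgt⟩ := exists_nat_gt ((D₁.b [] - D₁.a [])/ε₁ + (D₂.b [] - D₂.a [])/ε₂)
    have k1 : ((f N).1.length : ℝ) ≤ (D₁.b [] - D₁.a [])/ε₁ := (le_div_iff₀ hε₁).mpr (hb₁ N)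
    have k2 : ((f N).2.length : ℝ) ≤ (D₂.b [] - D₂.a [])/ε₂ := (le_div_iff₀ hε₂).mpr (hb₂ N)
    have k3 : (N : ℝ) ≤ ((f N).1.length : ℝ) + ((f N).2.length : ℝ) := by
      exact_mod_cast hcount N
    linarith
end

section
/- Let E ⊂ ℝ be a subset of the real line and define EE⁻¹ = {x/y : x, y ∈ E, y ≠ 0}. If the packing dimension of E is strictly less than 1/2, then EE⁻¹ ≠ ℝ. -/
open Set Filter
open scoped ENNReal NNReal

/-- The covering number of `s` at scale `δ`: the least number of balls of radius `δ`
needed to cover `s` (`⊤` if no finite cover exists). -/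
noncomputable def coveringNumber (s : Set ℝ) (δ : ℝ) : ℕ∞ :=
  sInf {n : ℕ∞ | ∃ F : Finset ℝ, (F.card : ℕ∞) = n ∧ s ⊆ ⋃ x ∈ F, Metric.ball x δ}

/-- The upper box (Minkowski) dimension of `s ⊆ ℝ`: the infimum of all exponents `d`
such that eventually `N(s, δ) ≤ δ^(-d)` as `δ → 0⁺`. -/
noncomputable def upperBoxDim (s : Set ℝ) : ℝ≥0∞ :=
  sInf {d : ℝ≥0∞ | ∃ r : ℝ≥0, d = r ∧ ∀ᶠ δ : ℝ in nhdsWithin 0 (Set.Ioi 0),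
    (coveringNumber s δ : ℝ≥0∞) ≤ ENNReal.ofReal δ ^ (-(r : ℝ))}

/-- The packing dimension of `s ⊆ ℝ`, defined via countable covers by sets of bounded
upper box dimension. -/
noncomputable def packingDim (s : Set ℝ) : ℝ≥0∞ :=
  ⨅ (t : ℕ → Set ℝ) (_ : s ⊆ ⋃ n, t n), ⨆ n, upperBoxDim (t n)

/-!
Cover `E` by countably many sets `t n` of upper box dimension `< 1/2`, and cut each of them
into pieces `A` bounded by `R` and pieces `B` bounded away from `0` by `ε`. On such pieces
`(x, y) ↦ x / y` is Lipschitz in each variable, so the quotients of two pieces of radius `δ`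
form a set of diameter `O(δ)`. Covering `A` and `B` with `δ^(-r)` and `δ^(-s)` balls, `r + s < 1`, gives
`|A / B| = O(δ^(1 - r - s)) → 0`. Thus `E E⁻¹` is a countable union of Lebesgue-null sets,
so it is not `ℝ`.
-/

open MeasureTheory Topology
open Metric (ball closedBall ediam eball_ofReal ediam_eball_le ediam_mono)
open scoped Pointwise

lemma coveringNumber_mono {s t : Set ℝ} (h : s ⊆ t) (δ : ℝ) :
    coveringNumber s δ ≤ coveringNumber t δ :=
  sInf_le_sInf fun _ ⟨F, hF, hcov⟩ => ⟨F, hF, h.trans hcov⟩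

lemma upperBoxDim_mono {s t : Set ℝ} (h : s ⊆ t) : upperBoxDim s ≤ upperBoxDim t :=
  sInf_le_sInf fun _ ⟨r, hr, hev⟩ => ⟨r, hr, hev.mono fun δ hδ =>
    (ENat.toENNReal_le.2 (coveringNumber_mono h δ)).trans hδ⟩

lemma exists_finset_card_eq_coveringNumber {s : Set ℝ} {δ : ℝ} (h : coveringNumber s δ ≠ ⊤) :
    ∃ F : Finset ℝ, (F.card : ℕ∞) = coveringNumber s δ ∧ s ⊆ ⋃ x ∈ F, ball x δ := by
  have hne : {n : ℕ∞ | ∃ F : Finset ℝ, (F.card : ℕ∞) = n ∧ s ⊆ ⋃ x ∈ F, ball x δ}.Nonempty := by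
    by_contra hemp
    rw [not_nonempty_iff_eq_empty] at hemp
    exact h (by rw [coveringNumber, hemp, sInf_empty])
  exact csInf_mem hne

lemma exists_coveringNumber_le_rpow_of_upperBoxDim_lt {s : Set ℝ} {d : ℝ≥0∞}
    (h : upperBoxDim s < d) :
    ∃ r : ℝ≥0, (r : ℝ≥0∞) < d ∧ ∀ᶠ δ : ℝ in 𝓝[>] 0,
      (coveringNumber s δ : ℝ≥0∞) ≤ ENNReal.ofReal δ ^ (-(r : ℝ)) := by
  obtain ⟨_, ⟨r, rfl, hev⟩, hrd⟩ := sInf_lt_iff.1 h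
  exact ⟨r, hrd, hev⟩

lemma exists_upperBoxDim_lt_of_packingDim_lt {s : Set ℝ} {d : ℝ≥0∞} (h : packingDim s < d) :
    ∃ t : ℕ → Set ℝ, s ⊆ ⋃ n, t n ∧ ∀ n, upperBoxDim (t n) < d := by
  obtain ⟨t, ht⟩ := iInf_lt_iff.1 h
  obtain ⟨hst, hsup⟩ := iInf_lt_iff.1 ht
  exact ⟨t, hst, fun n => (le_iSup (fun n => upperBoxDim (t n)) n).trans_lt hsup⟩

lemma lipschitzOnWith_inv_compl_ball {𝕜 : Type*} [NormedField 𝕜] {ε : ℝ≥0} (hε : 0 < ε) :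
    LipschitzOnWith (ε ^ 2)⁻¹ (·⁻¹ : 𝕜 → 𝕜) (ball 0 ε)ᶜ := by
  refine LipschitzOnWith.of_dist_le_mul fun z hz w hw => ?_
  simp only [mem_compl_iff, mem_ball_zero_iff, not_lt] at hz hw
  have hε' : (0 : ℝ) < ε := hε
  rw [dist_inv_inv₀ (norm_pos_iff.1 (hε'.trans_le hz)) (norm_pos_iff.1 (hε'.trans_le hw)),
    div_eq_inv_mul]
  push_cast
  gcongr
  rw [sq]
  exact mul_le_mul hz hw hε'.le (norm_nonneg _)

lemma volume_image2_le_of_finset_cover {f : ℝ → ℝ → ℝ} {A B : Set ℝ} {K₁ K₂ : ℝ≥0}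
    (hf₁ : ∀ b ∈ B, LipschitzOnWith K₁ (f · b) A) (hf₂ : ∀ a ∈ A, LipschitzOnWith K₂ (f a) B)
    {F G : Finset ℝ} {δ : ℝ} (hF : A ⊆ ⋃ x ∈ F, ball x δ) (hG : B ⊆ ⋃ y ∈ G, ball y δ) :
    volume (image2 f A B) ≤ F.card * G.card * (2 * (K₁ + K₂) * ENNReal.ofReal δ) := by
  have hpiece (x y : ℝ) : volume (image2 f (A ∩ ball x δ) (B ∩ ball y δ)) ≤
      2 * (K₁ + K₂) * ENNReal.ofReal δ := by
    have hball (z : ℝ) : ediam (ball z δ) ≤ 2 * ENNReal.ofReal δ := by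
      rw [← eball_ofReal]
      exact ediam_eball_le
    calc _ ≤ ediam (image2 f (A ∩ ball x δ) (B ∩ ball y δ)) := Real.volume_le_diam _
      _ ≤ K₁ * ediam (A ∩ ball x δ) + K₂ * ediam (B ∩ ball y δ) :=
          LipschitzOnWith.ediam_image2_le f _ _ (fun b hb => (hf₁ b hb.1).mono inter_subset_left)
            (fun a ha => (hf₂ a ha.1).mono inter_subset_left)
      _ ≤ K₁ * (2 * ENNReal.ofReal δ) + K₂ * (2 * ENNReal.ofReal δ) := by
          gcongr <;> exact (ediam_mono inter_subset_right).trans (hball _)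
      _ = 2 * (K₁ + K₂) * ENNReal.ofReal δ := by ring
  have hcover : image2 f A B ⊆ ⋃ x ∈ F, ⋃ y ∈ G, image2 f (A ∩ ball x δ) (B ∩ ball y δ) := by
    rintro _ ⟨a, ha, b, hb, rfl⟩
    obtain ⟨x, hx, hax⟩ := mem_iUnion₂.1 (hF ha)
    obtain ⟨y, hy, hby⟩ := mem_iUnion₂.1 (hG hb)
    exact mem_iUnion₂.2 ⟨x, hx, mem_iUnion₂.2 ⟨y, hy, mem_image2_of_mem ⟨ha, hax⟩ ⟨hb, hby⟩⟩⟩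
  calc volume (image2 f A B)
      ≤ ∑ x ∈ F, ∑ y ∈ G, volume (image2 f (A ∩ ball x δ) (B ∩ ball y δ)) :=
        (measure_mono hcover).trans <| (measure_biUnion_finset_le _ _).trans <|
          Finset.sum_le_sum fun x _ => measure_biUnion_finset_le _ _
    _ ≤ ∑ x ∈ F, ∑ y ∈ G, 2 * (K₁ + K₂) * ENNReal.ofReal δ := by
        gcongr with x _ y _
        exact hpiece x y
    _ = F.card * G.card * (2 * (K₁ + K₂) * ENNReal.ofReal δ) := by
        simp only [Finset.sum_const, nsmul_eq_mul, mul_assoc]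

lemma volume_image2_le_rpow_of_coveringNumber_le {f : ℝ → ℝ → ℝ} {A B : Set ℝ} {K₁ K₂ : ℝ≥0}
    (hf₁ : ∀ b ∈ B, LipschitzOnWith K₁ (f · b) A) (hf₂ : ∀ a ∈ A, LipschitzOnWith K₂ (f a) B)
    {r s δ : ℝ} (hδ : 0 < δ) (hA : (coveringNumber A δ : ℝ≥0∞) ≤ ENNReal.ofReal δ ^ (-r))
    (hB : (coveringNumber B δ : ℝ≥0∞) ≤ ENNReal.ofReal δ ^ (-s)) :
    volume (image2 f A B) ≤ 2 * (K₁ + K₂) * ENNReal.ofReal δ ^ (1 - r - s) := by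
  have hδ0 : ENNReal.ofReal δ ≠ 0 := by simpa using hδ
  have hfin (e : ℝ) : ENNReal.ofReal δ ^ e ≠ ⊤ :=
    ENNReal.rpow_ne_top_of_ne_zero hδ0 ENNReal.ofReal_ne_top
  obtain ⟨F, hFA, hF⟩ := exists_finset_card_eq_coveringNumber (by
    simpa using (hA.trans_lt (hfin _).lt_top).ne)
  obtain ⟨G, hGB, hG⟩ := exists_finset_card_eq_coveringNumber (by
    simpa using (hB.trans_lt (hfin _).lt_top).ne)
  calc volume (image2 f A B) ≤ F.card * G.card * (2 * (K₁ + K₂) * ENNReal.ofReal δ) :=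
        volume_image2_le_of_finset_cover hf₁ hf₂ hF hG
    _ ≤ ENNReal.ofReal δ ^ (-r) * ENNReal.ofReal δ ^ (-s) *
          (2 * (K₁ + K₂) * ENNReal.ofReal δ ^ (1 : ℝ)) := by
        rw [ENNReal.rpow_one]
        gcongr
        · simpa [← hFA] using hA
        · simpa [← hGB] using hB
    _ = 2 * (K₁ + K₂) * ENNReal.ofReal δ ^ (1 - r - s) := by
        rw [mul_left_comm, ← ENNReal.rpow_add _ _ hδ0 ENNReal.ofReal_ne_top,
          ← ENNReal.rpow_add _ _ hδ0 ENNReal.ofReal_ne_top]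
        ring_nf

lemma volume_image2_eq_zero_of_upperBoxDim_lt {f : ℝ → ℝ → ℝ} {A B : Set ℝ} {K₁ K₂ : ℝ≥0}
    (hf₁ : ∀ b ∈ B, LipschitzOnWith K₁ (f · b) A) (hf₂ : ∀ a ∈ A, LipschitzOnWith K₂ (f a) B)
    {a b : ℝ≥0∞} (hab : a + b ≤ 1) (hA : upperBoxDim A < a) (hB : upperBoxDim B < b) :
    volume (image2 f A B) = 0 := by
  obtain ⟨r, hra, hAr⟩ := exists_coveringNumber_le_rpow_of_upperBoxDim_lt hA
  obtain ⟨s, hsb, hBs⟩ := exists_coveringNumber_le_rpow_of_upperBoxDim_lt hB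
  have hrs : 0 < 1 - (r : ℝ) - s := by
    have : ((r + s : ℝ≥0) : ℝ≥0∞) < 1 := by
      push_cast
      exact (ENNReal.add_lt_add hra hsb).trans_le hab
    have : (r : ℝ) + s < 1 := by exact_mod_cast this
    linarith
  have hbound : ∀ᶠ δ : ℝ in 𝓝[>] 0,
      volume (image2 f A B) ≤ 2 * (K₁ + K₂) * ENNReal.ofReal δ ^ (1 - (r : ℝ) - s) := by
    filter_upwards [hAr, hBs, self_mem_nhdsWithin] with δ hAδ hBδ hδ
    exact volume_image2_le_rpow_of_coveringNumber_le hf₁ hf₂ hδ hAδ hBδ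
  have hlim : Tendsto (fun δ : ℝ => 2 * (K₁ + K₂) * ENNReal.ofReal δ ^ (1 - (r : ℝ) - s))
      (𝓝[>] 0) (𝓝 0) := by
    have h0 : Tendsto (fun δ : ℝ => ENNReal.ofReal δ ^ (1 - (r : ℝ) - s)) (𝓝 0) (𝓝 0) := by
      simpa [Function.comp_def, ENNReal.zero_rpow_of_pos hrs] using
        ((ENNReal.continuous_rpow_const (y := 1 - r - s)).comp ENNReal.continuous_ofReal).tendsto 0
    simpa using ENNReal.Tendsto.const_mul (h0.mono_left nhdsWithin_le_nhds)
      (Or.inr (by finiteness))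
  exact nonpos_iff_eq_zero.1 (ge_of_tendsto hlim hbound)

lemma volume_div_eq_zero_of_upperBoxDim_lt {A B : Set ℝ} {R ε : ℝ≥0} (hε : 0 < ε)
    (hAR : A ⊆ closedBall 0 R) (hBε : B ⊆ (ball 0 ε)ᶜ) {a b : ℝ≥0∞} (hab : a + b ≤ 1)
    (hA : upperBoxDim A < a) (hB : upperBoxDim B < b) : volume (A / B) = 0 := by
  rw [← image2_div]
  refine volume_image2_eq_zero_of_upperBoxDim_lt (K₁ := ε⁻¹) (K₂ := R * (ε ^ 2)⁻¹)
    (fun y hy => ?_) (fun x hx => ?_) hab hA hB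
  · have hy : (ε : ℝ) ≤ ‖y‖ := by simpa using hBε hy
    have : LipschitzWith ‖y⁻¹‖₊ (· / y) := by
      simpa [smul_eq_mul, div_eq_inv_mul] using lipschitzWith_smul (α := ℝ) (β := ℝ) y⁻¹
    refine (this.weaken ?_).lipschitzOnWith
    rw [nnnorm_inv]
    exact inv_anti₀ hε (by exact_mod_cast hy)
  · have hx : ‖x‖ ≤ R := by simpa using hAR hx
    have : LipschitzOnWith (‖x‖₊ * (ε ^ 2)⁻¹) (x / ·) B := by
      simpa [Function.comp_def, div_eq_mul_inv] using
        ((lipschitzWith_smul x).comp_lipschitzOnWith (lipschitzOnWith_inv_compl_ball hε)).mono hBε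
    refine this.weaken ?_
    gcongr
    exact_mod_cast hx

theorem stmt_19 (E : Set ℝ) (hdim : packingDim E < 1 / 2) :
    {z : ℝ | ∃ x ∈ E, ∃ y ∈ E, y ≠ 0 ∧ z = x / y} ≠ Set.univ := by
  obtain ⟨t, hEt, ht⟩ := exists_upperBoxDim_lt_of_packingDim_lt hdim
  have hnull (n m j k : ℕ) :
      volume ((t n ∩ closedBall 0 (j : ℝ≥0)) / (t m \ ball 0 ↑((k + 1 : ℝ≥0)⁻¹))) = 0 :=
    volume_div_eq_zero_of_upperBoxDim_lt (by positivity) inter_subset_right (fun _ hy => hy.2)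
      (ENNReal.add_halves 1).le ((upperBoxDim_mono inter_subset_left).trans_lt (ht n))
      ((upperBoxDim_mono sdiff_subset).trans_lt (ht m))
  have hcover : {z : ℝ | ∃ x ∈ E, ∃ y ∈ E, y ≠ 0 ∧ z = x / y} ⊆
      ⋃ (n : ℕ) (m : ℕ) (j : ℕ) (k : ℕ),
        (t n ∩ closedBall 0 (j : ℝ≥0)) / (t m \ ball 0 ↑((k + 1 : ℝ≥0)⁻¹)) := by
    rintro _ ⟨x, hx, y, hy, hy0, rfl⟩
    obtain ⟨n, hxn⟩ := mem_iUnion.1 (hEt hx)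
    obtain ⟨m, hym⟩ := mem_iUnion.1 (hEt hy)
    obtain ⟨j, hj⟩ := exists_nat_ge ‖x‖
    obtain ⟨k, hk⟩ := exists_nat_one_div_lt (norm_pos_iff.2 hy0)
    simp only [mem_iUnion]
    refine ⟨n, m, j, k, mem_div.2 ⟨x, ⟨hxn, by simpa using hj⟩, y, ⟨hym, ?_⟩, rfl⟩⟩
    simpa [one_div] using hk.le
  intro huniv
  have := measure_mono_null hcover <| measure_iUnion_null fun n => measure_iUnion_null fun m =>
    measure_iUnion_null fun j => measure_iUnion_null fun k => hnull n m j k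
  simp [huniv] at this
end
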